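/- arXiv:1510.01697 — 10 statements merged into one kernel-verified Lean document; each statement's English description precedes it below -/
import Mathlib

section
/- Let q be a real number with q > 1, and let n ≥ 1 and a ≥ 0 be integers. Then Σ_{k=0}^{a} (−1)^{n−k} · C_q(n,k) · q^{binom(n−k,2)} = (−1)^{n+a} · C_q(n−1,a) · q^{binom(n−a,2)}, where binom(m,2) = m(m−1)/2. -/
/-- The Gaussian binomial coefficient `C_q(n,k)` for a real `q > 1` and integers `n, k`:
`∏_{i=1}^{k} (q^{n−i+1} − 1)/(q^i − 1)` if `0 ≤ k ≤ n`, and `0` otherwise. -/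
noncomputable def gaussBinom (q : ℝ) (n k : ℤ) : ℝ :=
  if 0 ≤ k ∧ k ≤ n then
    ∏ i ∈ Finset.Icc (1 : ℤ) k, (q ^ (n - i + 1) - 1) / (q ^ i - 1)
  else 0

/-- `binom(m,2) = m(m−1)/2`, as a real number. -/
noncomputable def binom2 (m : ℤ) : ℝ := ((m * (m - 1) : ℤ) : ℝ) / 2

lemma icc_insert (a b : ℤ) (h : a ≤ b + 1) :
    Finset.Icc a (b+1) = insert (b+1) (Finset.Icc a b) := by
  ext x; simp only [Finset.mem_Icc, Finset.mem_insert]; omega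

lemma gb_zero (q : ℝ) (n : ℤ) (hn : 0 ≤ n) : gaussBinom q n 0 = 1 := by
  simp [gaussBinom, hn]

-- top recurrence: C(n,k) = C(n,k-1) * (q^(n-k+1)-1)/(q^k-1)
lemma gb_top (q : ℝ) {n k : ℤ} (h1 : 1 ≤ k) (h2 : k ≤ n) :
    gaussBinom q n k = gaussBinom q n (k-1) * ((q ^ (n-k+1) - 1) / (q ^ k - 1)) := by
  unfold gaussBinom
  rw [if_pos ⟨by omega, h2⟩, if_pos ⟨by omega, by omega⟩]
  have hins : Finset.Icc (1:ℤ) k = insert k (Finset.Icc 1 (k-1)) := by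
    have := icc_insert 1 (k-1) (by omega); simpa using this
  rw [hins, Finset.prod_insert (by simp), mul_comm]

-- left recurrence: C(n,k) = C(n-1,k-1) * (q^n-1)/(q^k-1), by induction on k
lemma gb_left (q : ℝ) {n k : ℤ} (h1 : 1 ≤ k) (h2 : k ≤ n) :
    gaussBinom q n k = gaussBinom q (n-1) (k-1) * ((q ^ n - 1) / (q ^ k - 1)) := by
  revert h2
  refine Int.le_induction (motive := fun k _ => k ≤ n →
    gaussBinom q n k = gaussBinom q (n-1) (k-1) * ((q ^ n - 1) / (q ^ k - 1))) ?_ ?_ k h1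
  · intro h2
    rw [gb_top q le_rfl h2]
    simp only [sub_self, gb_zero q n (by omega), gb_zero q (n-1) (by omega)]
    norm_num
  · intro k hk ih h2
    have hkn : k ≤ n := by omega
    rw [gb_top q (by omega) h2, show k + 1 - 1 = k by ring, ih hkn,
      gb_top q hk (by omega), show n - (k+1) + 1 = (n-1) - k + 1 by ring,
      show (k:ℤ) - 1 = k - 1 by rfl]
    ring

lemma pascal (q : ℝ) (hq : 1 < q) {n k : ℤ} (h1 : 1 ≤ k) (h2 : k ≤ n) :
    gaussBinom q n k = gaussBinom q (n-1) k + q ^ (n-k) * gaussBinom q (n-1) (k-1) := by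
  have hq0 : (0:ℝ) < q := by linarith
  have hqne : q ≠ 0 := ne_of_gt hq0
  have hpow : ∀ m : ℤ, 1 ≤ m → q ^ m - 1 ≠ 0 := fun m hm =>
    sub_ne_zero.mpr (ne_of_gt (one_lt_zpow₀ hq (by omega)))
  rcases eq_or_lt_of_le h2 with rfl | hlt
  · -- k = n
    rw [gb_left q h1 le_rfl]
    have h0 : gaussBinom q (k-1) k = 0 := by
      unfold gaussBinom; rw [if_neg]; omega
    rw [h0, sub_self, zpow_zero, zero_add, one_mul,
      div_self (hpow k h1), mul_one]
  · -- k ≤ n - 1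
    rw [gb_left q h1 h2, gb_top q h1 (by omega)]
    have hz : q ^ (n-k) * q ^ k = q ^ n := by
      rw [← zpow_add₀ hqne]; congr 1; ring
    have hd := hpow k h1
    rw [show (n-1) - k + 1 = n - k by ring]
    field_simp
    linear_combination -(gaussBinom q (n-1) (k-1)) * hz

theorem stmt0 (q : ℝ) (hq : 1 < q) (n a : ℤ) (hn : 1 ≤ n) (ha : 0 ≤ a) :
    ∑ k ∈ Finset.Icc (0 : ℤ) a,
        (-1 : ℝ) ^ (n - k) * gaussBinom q n k * q ^ binom2 (n - k)
      = (-1 : ℝ) ^ (n + a) * gaussBinom q (n - 1) a * q ^ binom2 (n - a) := by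
  have hq0 : (0:ℝ) < q := by linarith
  have hqne : q ≠ 0 := ne_of_gt hq0
  have hneg : ∀ m : ℤ, (-1:ℝ) ^ (m+1) = -(-1:ℝ) ^ m := fun m => by
    rw [zpow_add_one₀ (by norm_num)]; ring
  have hneg2 : ∀ m j : ℤ, (-1:ℝ) ^ (m + 2*j) = (-1:ℝ) ^ m := fun m j => by
    rw [zpow_add₀ (by norm_num : (-1:ℝ) ≠ 0), zpow_mul]; norm_num
  refine Int.le_induction (motive := fun a _ =>
    (∑ k ∈ Finset.Icc (0 : ℤ) a,
        (-1 : ℝ) ^ (n - k) * gaussBinom q n k * q ^ binom2 (n - k))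
      = (-1 : ℝ) ^ (n + a) * gaussBinom q (n - 1) a * q ^ binom2 (n - a)) ?_ ?_ a ha
  · beta_reduce
    rw [Finset.Icc_self, Finset.sum_singleton]
    rw [gb_zero q n (by omega), gb_zero q (n-1) (by omega)]
    norm_num
  · intro a ha ih
    beta_reduce
    beta_reduce at ih
    rw [icc_insert 0 a (by omega), Finset.sum_insert (by simp), ih]
    by_cases hcase : a + 1 ≤ n
    · -- real case
      rw [pascal q hq (by omega) hcase]
      have hsign1 : (-1:ℝ) ^ (n - (a+1)) = (-1:ℝ) ^ (n + (a+1)) := by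
        rw [show n + (a+1) = (n - (a+1)) + 2*(a+1) by ring, hneg2]
      have hsign2 : (-1:ℝ) ^ (n + (a+1)) = -(-1:ℝ) ^ (n + a) := by
        rw [show n + (a+1) = (n+a) + 1 by ring, hneg]
      have hrpow : q ^ binom2 (n - a) = q ^ binom2 (n - (a+1)) * q ^ (n - a - 1) := by
        have hb : binom2 (n - a) = binom2 (n - (a+1)) + ((n - a - 1 : ℤ) : ℝ) := by
          unfold binom2; push_cast; ring
        rw [hb, Real.rpow_add hq0, Real.rpow_intCast]
      rw [hsign1, hsign2, hrpow, show n - (a+1) = n - a - 1 by ring]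
      ring
    · -- degenerate: everything vanishes
      have h1 : gaussBinom q n (a+1) = 0 := by unfold gaussBinom; rw [if_neg]; omega
      have h2 : gaussBinom q (n-1) (a+1) = 0 := by unfold gaussBinom; rw [if_neg]; omega
      have h3 : gaussBinom q (n-1) a = 0 := by unfold gaussBinom; rw [if_neg]; omega
      rw [h1, h2, h3]; ring
end

section
/- Let q ≥ 2 be a real number and let f : [0,∞) → ℝ be defined by f(x) = log(1 + q^{−x}) / log(1 + q^{−x−1}). Then for every x ≥ 0 the derivative of f satisfies f'(x) ≥ (q^x(2q−2) − 1)·log(q) / (2 q^{x+1} (2q^x + 1)(q^x + 1)(q^{x+1} + 1) · log(1 + q^{−x−1})²). In particular, f'(x) > 0 for all x ∈ (0,∞), so f is strictly monotonically increasing. -/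
open Real Set

lemma mylog_lb (t : ℝ) (ht : 0 ≤ t) : 2*t/(2+t) ≤ Real.log (1+t) := by
  set F : ℝ → ℝ := fun s => Real.log (1+s) - 2*s/(2+s) with hF
  have key : ∀ s : ℝ, 0 ≤ s → HasDerivAt F (1/(1+s) - 4/(2+s)^2) s := by
    intro s hs
    have h1 : (0:ℝ) < 1 + s := by linarith
    have h2 : (0:ℝ) < 2 + s := by linarith
    have d1 : HasDerivAt (fun s:ℝ => Real.log (1+s)) (1/(1+s)) s := by
      have := ((hasDerivAt_id s).const_add (1:ℝ)).log (ne_of_gt h1)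
      simpa using this
    have d2 : HasDerivAt (fun s:ℝ => 2*s/(2+s)) (4/(2+s)^2) s := by
      have := ((hasDerivAt_id s).const_mul (2:ℝ)).div ((hasDerivAt_id s).const_add (2:ℝ)) (ne_of_gt h2)
      refine this.congr_deriv ?_
      simp only [id]
      ring
    exact d1.sub d2
  have mono : MonotoneOn F (Set.Ici 0) := by
    apply monotoneOn_of_deriv_nonneg (convex_Ici 0)
    · exact fun s hs => ((key s hs).continuousAt.continuousWithinAt)
    · intro s hs
      rw [interior_Ici] at hs
      exact (key s (le_of_lt hs)).differentiableAt.differentiableWithinAt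
    · intro s hs
      rw [interior_Ici] at hs
      rw [(key s hs.le).deriv]
      have h1 : (0:ℝ) < 1 + s := by linarith [(show (0:ℝ) < s from hs).le]
      have h2 : (0:ℝ) < 2 + s := by linarith [(show (0:ℝ) < s from hs).le]
      rw [sub_nonneg, div_le_div_iff₀ (by positivity) h1]
      nlinarith [sq_nonneg s]
  have h0 := mono Set.self_mem_Ici (Set.mem_Ici.2 ht) ht
  simp only [hF] at h0
  norm_num at h0
  linarith

lemma mylog_ub (t : ℝ) (ht : 0 ≤ t) : Real.log (1+t) ≤ t*(t+2)/(2*(t+1)) := by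
  set F : ℝ → ℝ := fun s => s*(s+2)/(2*(s+1)) - Real.log (1+s) with hF
  have key : ∀ s : ℝ, 0 ≤ s → HasDerivAt F (s^2/(2*(1+s)^2)) s := by
    intro s hs
    have h1 : (0:ℝ) < 1 + s := by linarith
    have d1 : HasDerivAt (fun s:ℝ => Real.log (1+s)) (1/(1+s)) s := by
      have := ((hasDerivAt_id s).const_add (1:ℝ)).log (ne_of_gt h1)
      simpa using this
    have d2 : HasDerivAt (fun s:ℝ => s*(s+2)/(2*(s+1)))
        (((1*(s+2) + s*1) * (2*(s+1)) - s*(s+2) * (2*1)) / (2*(s+1))^2) s := by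
      exact ((hasDerivAt_id s).mul ((hasDerivAt_id s).add_const 2)).div
        (((hasDerivAt_id s).add_const 1).const_mul 2) (by positivity)
    have := d2.sub d1
    refine this.congr_deriv ?_
    field_simp
    ring
  have mono : MonotoneOn F (Set.Ici 0) := by
    apply monotoneOn_of_deriv_nonneg (convex_Ici 0)
    · exact fun s hs => ((key s hs).continuousAt.continuousWithinAt)
    · intro s hs
      rw [interior_Ici] at hs
      exact (key s (le_of_lt hs)).differentiableAt.differentiableWithinAt
    · intro s hs
      rw [interior_Ici] at hs
      rw [(key s hs.le).deriv]
      positivity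
  have h0 := mono Set.self_mem_Ici (Set.mem_Ici.2 ht) ht
  simp only [hF] at h0
  norm_num at h0
  linarith

lemma myderiv (q : ℝ) (hq : 0 < q) (x : ℝ) :
    HasDerivAt (fun y : ℝ => Real.log (1 + q ^ (-y))) (-Real.log q / (q ^ x + 1)) x := by
  have hx : (0:ℝ) < q ^ (-x) := Real.rpow_pos_of_pos hq _
  have hxx : (0:ℝ) < q ^ x := Real.rpow_pos_of_pos hq _
  have d1 : HasDerivAt (fun y : ℝ => q ^ (-y)) (q ^ (-x) * Real.log q * (-1)) x := by
    have := (Real.hasStrictDerivAt_const_rpow hq (-x)).hasDerivAt.comp x (hasDerivAt_neg x)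
    simpa [Function.comp_def] using this
  have d2 := (d1.const_add 1).log (by positivity)
  refine d2.congr_deriv ?_
  have hpow : q ^ (-x) * q ^ x = 1 := by
    rw [← Real.rpow_add hq]; simp
  field_simp
  linear_combination (-Real.log q) * hpow

theorem stmt1 (q : ℝ) (hq : 2 ≤ q)
    (f : ℝ → ℝ)
    (hf : ∀ x : ℝ, f x = Real.log (1 + q ^ (-x)) / Real.log (1 + q ^ (-x - 1))) :
    (∀ x : ℝ, 0 ≤ x →
      (q ^ x * (2 * q - 2) - 1) * Real.log q /
          (2 * q ^ (x + 1) * (2 * q ^ x + 1) * (q ^ x + 1) * (q ^ (x + 1) + 1) *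
            Real.log (1 + q ^ (-x - 1)) ^ 2)
        ≤ deriv f x) ∧
    (∀ x : ℝ, 0 < x → 0 < deriv f x) ∧
    StrictMonoOn f (Set.Ici 0) := by
  have hq0 : (0:ℝ) < q := by linarith
  have hq1 : (1:ℝ) < q := by linarith
  have hlogq : 0 < Real.log q := Real.log_pos hq1
  have hfe : f = fun x => Real.log (1 + q ^ (-x)) / Real.log (1 + q ^ (-x - 1)) := funext hf
  subst hfe
  -- derivative of the shifted log term
  have dh : ∀ x : ℝ, HasDerivAt (fun y : ℝ => Real.log (1 + q ^ (-y - 1)))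
      (-Real.log q / (q ^ (x+1) + 1) * 1) x := by
    intro x
    have h1 := (myderiv q hq0 (x+1)).comp x ((hasDerivAt_id x).add_const 1)
    have heq : (fun y : ℝ => Real.log (1 + q ^ (-y - 1)))
        = fun y : ℝ => Real.log (1 + q ^ (-(y+1))) := by
      funext y
      rw [show -(y + 1) = -y - 1 by ring]
    rw [heq]
    exact h1
  have hhpos : ∀ x : ℝ, 0 < Real.log (1 + q ^ (-x - 1)) := by
    intro x
    apply Real.log_pos
    have := Real.rpow_pos_of_pos hq0 (-x-1)
    linarith
  have df : ∀ x : ℝ, HasDerivAt (fun y : ℝ => Real.log (1 + q ^ (-y)) / Real.log (1 + q ^ (-y - 1)))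
      ((-Real.log q / (q ^ x + 1) * Real.log (1 + q ^ (-x - 1)) -
        Real.log (1 + q ^ (-x)) * (-Real.log q / (q ^ (x+1) + 1) * 1)) /
        (Real.log (1 + q ^ (-x - 1)))^2) x := by
    intro x
    exact (myderiv q hq0 x).div (dh x) (ne_of_gt (hhpos x))
  have main : ∀ x : ℝ, 0 ≤ x →
      (q ^ x * (2 * q - 2) - 1) * Real.log q /
          (2 * q ^ (x + 1) * (2 * q ^ x + 1) * (q ^ x + 1) * (q ^ (x + 1) + 1) *
            Real.log (1 + q ^ (-x - 1)) ^ 2)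
        ≤ deriv (fun y : ℝ => Real.log (1 + q ^ (-y)) / Real.log (1 + q ^ (-y - 1))) x := by
    intro x hx
    rw [(df x).deriv]
    set A := q ^ x with hA
    set B := q ^ (x+1) with hB
    have hApos : 0 < A := Real.rpow_pos_of_pos hq0 _
    have hBpos : 0 < B := Real.rpow_pos_of_pos hq0 _
    have hBA : B = q * A := by
      rw [hB, hA, Real.rpow_add hq0, Real.rpow_one]; ring
    have hu : q ^ (-x) = A⁻¹ := by rw [hA, Real.rpow_neg hq0.le]
    have hv : q ^ (-x - 1) = B⁻¹ := by
      rw [hB, show -x - 1 = -(x+1) by ring, Real.rpow_neg hq0.le]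
    set g := Real.log (1 + q ^ (-x)) with hg
    set h := Real.log (1 + q ^ (-x - 1)) with hh
    have hhp : 0 < h := hhpos x
    -- lower bound for g
    have gl : 2/(2*A+1) ≤ g := by
      have := mylog_lb A⁻¹ (by positivity)
      have heq : 2*A⁻¹/(2+A⁻¹) = 2/(2*A+1) := by
        field_simp
      rw [heq] at this
      rw [hg, hu]; exact this
    -- upper bound for h
    have hub : h ≤ (2*B+1)/(2*B*(B+1)) := by
      have := mylog_ub B⁻¹ (by positivity)
      have heq : B⁻¹*(B⁻¹+2)/(2*(B⁻¹+1)) = (2*B+1)/(2*B*(B+1)) := by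
        field_simp
        ring
      rw [heq] at this
      rw [hh, hv]; exact this
    have gl' : 2 ≤ (2*A+1)*g := by
      rw [div_le_iff₀ (by positivity)] at gl
      linarith [gl]
    have hub' : 2*B*(B+1)*h ≤ 2*B+1 := by
      rw [le_div_iff₀ (by positivity)] at hub
      linarith [hub]
    have hT2 : A*(2*q-2)-1 ≤ 2*B*(2*A+1)*((A+1)*g - (B+1)*h) := by
      nlinarith [mul_le_mul_of_nonneg_left gl' (by positivity : (0:ℝ) ≤ 2*B*(A+1)),
        mul_le_mul_of_nonneg_left hub' (by positivity : (0:ℝ) ≤ 2*A+1), hBA,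
        hApos.le, hBpos.le]
    set N := -Real.log q / (A + 1) * h - g * (-Real.log q / (B + 1) * 1) with hN
    have hKN : (A * (2 * q - 2) - 1) * Real.log q ≤ N * (2 * B * (2*A+1) * (A+1) * (B+1)) := by
      have hfield : N * (2 * B * (2*A+1) * (A+1) * (B+1))
          = Real.log q * (2*B*(2*A+1)*((A+1)*g - (B+1)*h)) := by
        rw [hN]; field_simp; ring
      rw [hfield]
      nlinarith [mul_le_mul_of_nonneg_left hT2 hlogq.le]
    rw [div_le_div_iff₀ (by positivity) (by positivity : (0:ℝ) < h^2)]
    nlinarith [mul_le_mul_of_nonneg_right hKN (sq_nonneg h)]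
  refine ⟨main, ?_, ?_⟩
  · intro x hx
    have hbd := main x hx.le
    have hA1 : 1 ≤ q ^ x := Real.one_le_rpow hq1.le hx.le
    have hpos : 0 < (q ^ x * (2 * q - 2) - 1) * Real.log q /
          (2 * q ^ (x + 1) * (2 * q ^ x + 1) * (q ^ x + 1) * (q ^ (x + 1) + 1) *
            Real.log (1 + q ^ (-x - 1)) ^ 2) := by
      apply div_pos
      · apply mul_pos _ hlogq
        nlinarith [hA1]
      · have h1 : 0 < q ^ (x+1) := Real.rpow_pos_of_pos hq0 _
        have h2 : 0 < q ^ x := Real.rpow_pos_of_pos hq0 _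
        have h3 := hhpos x
        positivity
    linarith [hbd, hpos]
  · apply strictMonoOn_of_deriv_pos (convex_Ici 0)
    · exact fun x _ => ((df x).continuousAt).continuousWithinAt
    · intro x hx
      rw [interior_Ici] at hx
      rw [(df x).deriv]
      have hbd := main x (le_of_lt hx)
      rw [(df x).deriv] at hbd
      have hA1 : 1 ≤ q ^ x := Real.one_le_rpow hq1.le (le_of_lt hx)
      have hpos : 0 < (q ^ x * (2 * q - 2) - 1) * Real.log q /
            (2 * q ^ (x + 1) * (2 * q ^ x + 1) * (q ^ x + 1) * (q ^ (x + 1) + 1) *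
              Real.log (1 + q ^ (-x - 1)) ^ 2) := by
        apply div_pos
        · apply mul_pos _ hlogq
          nlinarith [hA1]
        · have h1 : 0 < q ^ (x+1) := Real.rpow_pos_of_pos hq0 _
          have h2 : 0 < q ^ x := Real.rpow_pos_of_pos hq0 _
          have h3 := hhpos x
          positivity
      linarith [hbd, hpos]
end

section
/- For real numbers x ≥ 0 and q ≥ 2 define α(x,q) := log(1 + q^{−x}) / log(1 + q^{−x−1}) and g(x,q) := (1 + q^{−x})^{α(x,q)/(α(x,q)−1)}. Then: (i) for each fixed q ≥ 2 the function x ↦ g(x,q) is monotonically decreasing on [0,∞); and (ii) the function q ↦ g(0,q) is monotonically decreasing on [2,∞). -/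
open Real Set

/-- `α(x,q) := log(1 + q^{−x}) / log(1 + q^{−x−1})`. -/
noncomputable def alphaF (x q : ℝ) : ℝ :=
  Real.log (1 + q ^ (-x)) / Real.log (1 + q ^ (-x - 1))

/-- `g(x,q) := (1 + q^{−x})^{α(x,q)/(α(x,q)−1)}`. -/
noncomputable def gF (x q : ℝ) : ℝ :=
  (1 + q ^ (-x)) ^ (alphaF x q / (alphaF x q - 1))

/-- auxiliary: the exponent as a function of `t = q^{-x}`. -/
noncomputable def fF (q t : ℝ) : ℝ :=
  (Real.log (1 + t)) ^ 2 / (Real.log (1 + t) - Real.log (1 + t / q))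

/-- concavity of log: `u * log(1+t) ≤ t * log(1+u)` for `0 < u ≤ t`. -/
lemma concav_aux {u t : ℝ} (hu : 0 < u) (hut : u ≤ t) :
    u * Real.log (1 + t) ≤ t * Real.log (1 + u) := by
  have ht : 0 < t := lt_of_lt_of_le hu hut
  have h := strictConcaveOn_log_Ioi.concaveOn.2 (Set.mem_Ioi.2 one_pos)
    (Set.mem_Ioi.2 (show (0:ℝ) < 1 + t by linarith))
    (show (0:ℝ) ≤ 1 - u / t by
      rw [sub_nonneg]; exact div_le_one_of_le₀ hut ht.le)
    (show (0:ℝ) ≤ u / t by positivity)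
    (show (1 - u / t) + u / t = 1 by ring)
  have hx : (1 - u / t) • (1 : ℝ) + (u / t) • (1 + t) = 1 + u := by
    field_simp
    simp only [smul_eq_mul]; field_simp; ring
  rw [hx, Real.log_one, smul_eq_mul, smul_eq_mul, mul_zero, zero_add] at h
  have := mul_le_mul_of_nonneg_left h ht.le
  calc u * Real.log (1 + t) = t * (u / t * Real.log (1 + t)) := by field_simp
  _ ≤ t * Real.log (1 + u) := this

/-- Key inequality. -/
lemma key {q t : ℝ} (hq : 2 ≤ q) (ht : 0 < t) :
    (q - 1) * Real.log (1 + t)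
      < 2 * (q + t) * (Real.log (1 + t) - Real.log (1 + t / q)) := by
  have hq0 : (0:ℝ) < q := by linarith
  have hqt : (0:ℝ) < q + t := by linarith
  set u : ℝ := t * (q - 1) / (q + t) with hu_def
  have hu : 0 < u := div_pos (by nlinarith) hqt
  have hut : u < t := by
    rw [hu_def, div_lt_iff₀ hqt]
    nlinarith
  have hlog_eq : Real.log (1 + t) - Real.log (1 + t / q) = Real.log (1 + u) := by
    have h1 : 1 + t / q = (q + t) / q := by field_simp
    have h2 : 1 + u = q * (1 + t) / (q + t) := by
      rw [hu_def]; field_simp; ring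
    rw [h1, h2, Real.log_div (by positivity) (by positivity),
      Real.log_div (by positivity) (by positivity),
      Real.log_mul (by positivity) (by positivity)]
    ring
  rw [hlog_eq]
  have hconcav := concav_aux hu hut.le
  have hlogu : 0 < Real.log (1 + u) := Real.log_pos (by linarith)
  have hqu : (q - 1) * t = u * (q + t) := by
    rw [hu_def]; field_simp
  have hquL : (q - 1) * t * Real.log (1 + t) = u * (q + t) * Real.log (1 + t) := by
    rw [hqu]
  have step : (q - 1) * Real.log (1 + t) * t ≤ (q + t) * Real.log (1 + u) * t := by
    nlinarith [mul_nonneg hqt.le (sub_nonneg.2 hconcav)]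
  have h1 : (q - 1) * Real.log (1 + t) ≤ (q + t) * Real.log (1 + u) :=
    le_of_mul_le_mul_right step ht
  nlinarith [mul_pos hqt hlogu]

lemma denom_pos {q t : ℝ} (hq : 2 ≤ q) (ht : 0 < t) :
    0 < Real.log (1 + t) - Real.log (1 + t / q) := by
  have hq0 : (0:ℝ) < q := by linarith
  have : t / q < t := by
    rw [div_lt_iff₀ hq0]; nlinarith
  have h2 : (0:ℝ) < 1 + t / q := by positivity
  linarith [Real.log_lt_log h2 (by linarith : 1 + t / q < 1 + t)]

lemma hasDerivAt_fF {q t : ℝ} (hq : 2 ≤ q) (ht : 0 < t) :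
    HasDerivAt (fF q)
      ((2 * Real.log (1 + t) * (1 / (1 + t)) * (Real.log (1 + t) - Real.log (1 + t / q))
        - (Real.log (1 + t)) ^ 2 * (1 / (1 + t) - 1 / (q + t)))
        / (Real.log (1 + t) - Real.log (1 + t / q)) ^ 2) t := by
  have hq0 : (0:ℝ) < q := by linarith
  have h1t : (0:ℝ) < 1 + t := by linarith
  have h1tq : (0:ℝ) < 1 + t / q := by positivity
  have ha : HasDerivAt (fun s : ℝ => Real.log (1 + s)) (1 / (1 + t)) t := by
    have := ((hasDerivAt_id t).const_add 1).log h1t.ne'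
    simpa using this
  have hb : HasDerivAt (fun s : ℝ => Real.log (1 + s / q)) (1 / (q + t)) t := by
    have := (((hasDerivAt_id t).div_const q).const_add 1).log h1tq.ne'
    convert this using 1
    · rfl
    simp only [id]; field_simp
  have hd := ha.sub hb
  have hnum := ha.pow 2
  have hne : Real.log (1 + t) - Real.log (1 + t / q) ≠ 0 := (denom_pos hq ht).ne'
  have := hnum.div hd hne
  convert this using 1
  · rfl
  · rfl
  · rfl
  simp only [Pi.sub_apply, Pi.pow_apply]
  push_cast
  ring

lemma deriv_pos_fF {q t : ℝ} (hq : 2 ≤ q) (ht : 0 < t) :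
    0 < deriv (fF q) t := by
  rw [(hasDerivAt_fF hq ht).deriv]
  have h1t : (0:ℝ) < 1 + t := by linarith
  have hqt : (0:ℝ) < q + t := by linarith
  have hd := denom_pos hq ht
  have hloga : 0 < Real.log (1 + t) := Real.log_pos (by linarith)
  have hkey := key hq ht
  have hfactor :
      2 * Real.log (1 + t) * (1 / (1 + t)) * (Real.log (1 + t) - Real.log (1 + t / q))
        - (Real.log (1 + t)) ^ 2 * (1 / (1 + t) - 1 / (q + t))
        = Real.log (1 + t) / ((1 + t) * (q + t))
          * (2 * (q + t) * (Real.log (1 + t) - Real.log (1 + t / q))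
            - (q - 1) * Real.log (1 + t)) := by
    field_simp
    ring
  apply div_pos
  · rw [hfactor]
    exact mul_pos (div_pos hloga (mul_pos h1t hqt)) (by linarith)
  · positivity

lemma fF_strictMono {q : ℝ} (hq : 2 ≤ q) : StrictMonoOn (fF q) (Set.Ioi 0) := by
  apply strictMonoOn_of_deriv_pos (convex_Ioi 0)
  · intro t ht
    exact (hasDerivAt_fF hq ht).continuousAt.continuousWithinAt
  · intro t ht
    rw [interior_Ioi] at ht
    exact deriv_pos_fF hq ht

lemma gF_eq {x q : ℝ} (hq : 2 ≤ q) : gF x q = Real.exp (fF q (q ^ (-x))) := by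
  have hq0 : (0:ℝ) < q := by linarith
  have ht : (0:ℝ) < q ^ (-x) := Real.rpow_pos_of_pos hq0 _
  have hrw : q ^ (-x - 1) = q ^ (-x) / q := by
    rw [Real.rpow_sub hq0, Real.rpow_one]
  have htq : 0 < q ^ (-x) / q := by positivity
  have htq_lt : q ^ (-x) / q < q ^ (-x) := by
    rw [div_lt_iff₀ hq0]; nlinarith
  have hb : 0 < Real.log (1 + q ^ (-x) / q) := Real.log_pos (by linarith)
  have hab : Real.log (1 + q ^ (-x) / q) < Real.log (1 + q ^ (-x)) :=
    Real.log_lt_log (by positivity) (by linarith)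
  have hbne : Real.log (1 + q ^ (-x) / q) ≠ 0 := hb.ne'
  have habne : Real.log (1 + q ^ (-x)) - Real.log (1 + q ^ (-x) / q) ≠ 0 := by
    intro h; linarith [sub_pos.2 hab]
  have halpha : alphaF x q = Real.log (1 + q ^ (-x)) / Real.log (1 + q ^ (-x) / q) := by
    rw [alphaF, hrw]
  have hexp : alphaF x q / (alphaF x q - 1)
      = Real.log (1 + q ^ (-x)) / (Real.log (1 + q ^ (-x)) - Real.log (1 + q ^ (-x) / q)) := by
    rw [halpha, div_sub_one hbne, div_div_div_cancel_right₀ hbne]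
  rw [gF, hexp, Real.rpow_def_of_pos (show (0:ℝ) < 1 + q ^ (-x) by linarith)]
  congr 1
  rw [fF, pow_two, mul_div_assoc]

theorem stmt2 :
    (∀ q : ℝ, 2 ≤ q → AntitoneOn (fun x : ℝ => gF x q) (Set.Ici 0)) ∧
    AntitoneOn (fun q : ℝ => gF 0 q) (Set.Ici 2) := by
  constructor
  · intro q hq x _ y _ hxy
    simp only
    rw [gF_eq hq, gF_eq hq]
    have hq0 : (0:ℝ) < q := by linarith
    apply Real.exp_le_exp.2
    have h1 : q ^ (-y) ≤ q ^ (-x) :=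
      Real.rpow_le_rpow_of_exponent_le (by linarith) (by linarith)
    exact (fF_strictMono hq).monotoneOn
      (Set.mem_Ioi.2 (Real.rpow_pos_of_pos hq0 _))
      (Set.mem_Ioi.2 (Real.rpow_pos_of_pos hq0 _)) h1
  · intro q1 h1 q2 h2 hle
    simp only
    have h1' : (2:ℝ) ≤ q1 := h1
    have h2' : (2:ℝ) ≤ q2 := h2
    rw [gF_eq h1', gF_eq h2']
    have hpow : ∀ q : ℝ, 2 ≤ q → q ^ (-(0:ℝ)) = (1:ℝ) := by
      intro q hq
      rw [neg_zero, Real.rpow_zero]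
    rw [hpow q1 h1', hpow q2 h2']
    apply Real.exp_le_exp.2
    rw [fF, fF]
    have hd1 := denom_pos h1' one_pos
    have hd2 := denom_pos h2' one_pos
    have hdd : Real.log (1 + 1 / q2) ≤ Real.log (1 + 1 / q1) := by
      apply Real.log_le_log (by positivity)
      have : 1 / q2 ≤ 1 / q1 := one_div_le_one_div_of_le (by linarith) hle
      linarith
    exact div_le_div_of_nonneg_left (sq_nonneg _) hd1 (by linarith)
end

section
/- Let q ≥ 2 be a real number, e a real number, d ≥ 1 an integer, and α > 1 a real number satisfying α · log(1 + q^{−e−1}) ≤ log(1 + q^{−e}). Then ∏_{i=0}^{d−1} (1 + q^{−e−i}) ≤ (1 + q^{−e})^{α/(α−1)}. -/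
open Real Finset

private lemma key_convex (c u : ℝ) (hc0 : 0 ≤ c) (hc1 : c ≤ 1) (hu : 1 ≤ u) :
    (c * u + (1 - c)) * Real.log (c * u + (1 - c)) ≤ c * (u * Real.log u) := by
  have h := Real.convexOn_mul_log.2 (Set.mem_Ici.2 (le_trans zero_le_one hu))
    (Set.mem_Ici.2 zero_le_one) hc0 (by linarith : (0:ℝ) ≤ 1 - c)
    (by ring)
  simpa using h

private lemma log_ratio_mono (c s t : ℝ) (hc0 : 0 < c) (hc1 : c ≤ 1) (hs : 0 < s)
    (hst : s ≤ t) :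
    Real.log (1 + c * s) * Real.log (1 + t) ≤ Real.log (1 + c * t) * Real.log (1 + s) := by
  set H : ℝ → ℝ := fun x => Real.log (1 + c * x) * Real.log (1 + s)
      - Real.log (1 + c * s) * Real.log (1 + x) with hH
  have key : (1 + c * s) * Real.log (1 + c * s) ≤ c * ((1 + s) * Real.log (1 + s)) := by
    have := key_convex c (1 + s) hc0.le hc1 (by linarith)
    convert this using 2 <;> ring
  have hlogmono : Real.log (1 + c * s) ≤ Real.log (1 + s) := by
    apply Real.log_le_log (by nlinarith)
    nlinarith
  have hdH : ∀ x : ℝ, 0 < x → HasDerivAt H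
      (c / (1 + c * x) * Real.log (1 + s) - Real.log (1 + c * s) * (1 / (1 + x))) x := by
    intro x hx
    have h1 : HasDerivAt (fun y : ℝ => 1 + c * y) c x := by
      have := ((hasDerivAt_id' x).const_mul c).const_add 1; rwa [mul_one] at this
    have h2 : HasDerivAt (fun y : ℝ => 1 + y) 1 x := by
      exact (hasDerivAt_id' x).const_add 1
    have hne1 : 1 + c * x ≠ 0 := by nlinarith
    have hne2 : 1 + x ≠ 0 := by nlinarith
    have l1 := (h1.log hne1).mul_const (Real.log (1 + s))
    have l2 := (h2.log hne2).const_mul (Real.log (1 + c * s))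
    rw [hH]; exact l1.sub l2
  have hmono : MonotoneOn H (Set.Ici s) := by
    apply monotoneOn_of_deriv_nonneg (convex_Ici s)
    · intro x hx
      exact ((hdH x (lt_of_lt_of_le hs hx)).continuousAt).continuousWithinAt
    · intro x hx
      rw [interior_Ici] at hx
      exact ((hdH x (hs.trans hx)).differentiableAt).differentiableWithinAt
    · intro x hx
      rw [interior_Ici] at hx
      have hxpos : 0 < x := hs.trans hx
      rw [(hdH x hxpos).deriv]
      rw [sub_nonneg]
      have p1 : (0:ℝ) < 1 + c * x := by nlinarith
      have p2 : (0:ℝ) < 1 + x := by nlinarith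
      rw [div_mul_eq_mul_div, mul_one_div, div_le_div_iff₀ p2 p1]
      -- goal: log (1 + c*s) * (1 + c*x) ≤ c * log (1 + s) * (1 + x)
      nlinarith [mul_nonneg (mul_nonneg hc0.le (sub_nonneg.2 hx.le))
        (sub_nonneg.2 hlogmono), key]
  have := hmono (Set.self_mem_Ici) (Set.mem_Ici.2 hst) hst
  simp only [hH] at this
  linarith

private lemma step_ineq (q e α : ℝ) (hq : 2 ≤ q) (hα : 1 < α)
    (h : α * Real.log (1 + q ^ (-e - 1)) ≤ Real.log (1 + q ^ (-e)))
    (i : ℕ) :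
    α * Real.log (1 + q ^ (-e - (i + 1) : ℝ)) ≤ Real.log (1 + q ^ (-e - i : ℝ)) := by
  have hq0 : (0:ℝ) < q := by linarith
  have hq1 : (1:ℝ) < q := by linarith
  set c : ℝ := q⁻¹ with hc
  have hc0 : 0 < c := inv_pos.2 hq0
  have hc1 : c ≤ 1 := by
    rw [hc]
    exact inv_le_one_of_one_le₀ hq1.le
  set s : ℝ := q ^ (-e - i : ℝ) with hsdef
  set t : ℝ := q ^ (-e) with htdef
  have hs : 0 < s := Real.rpow_pos_of_pos hq0 _
  have ht : 0 < t := Real.rpow_pos_of_pos hq0 _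
  have hst : s ≤ t := by
    apply Real.rpow_le_rpow_of_exponent_le hq1.le
    have : (0:ℝ) ≤ i := Nat.cast_nonneg i
    linarith
  have hcs : c * s = q ^ (-e - (i + 1) : ℝ) := by
    rw [hc, hsdef, show (-e - (i + 1) : ℝ) = (-e - i) + (-1) by ring,
      Real.rpow_add hq0, Real.rpow_neg_one]
    ring
  have hct : c * t = q ^ (-e - 1) := by
    rw [hc, htdef, show (-e - 1 : ℝ) = (-e) + (-1) by ring,
      Real.rpow_add hq0, Real.rpow_neg_one]
    ring
  have hmono := log_ratio_mono c s t hc0 hc1 hs hst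
  rw [hcs, hct] at hmono
  have hlt : 0 < Real.log (1 + t) := Real.log_pos (by linarith)
  have hls : 0 ≤ Real.log (1 + s) := Real.log_nonneg (by linarith)
  -- α * log(1 + q^(-e-(i+1))) * log(1+t) ≤ α * log(1+q^(-e-1)) * log(1+s)
  --   ≤ log(1+t) * log(1+s)
  have h1 : α * Real.log (1 + q ^ (-e - (i + 1) : ℝ)) * Real.log (1 + t)
      ≤ Real.log (1 + t) * Real.log (1 + s) := by
    calc α * Real.log (1 + q ^ (-e - (i + 1) : ℝ)) * Real.log (1 + t)
        ≤ α * (Real.log (1 + q ^ (-e - 1)) * Real.log (1 + s)) := by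
          rw [mul_assoc]; exact mul_le_mul_of_nonneg_left hmono (by linarith)
      _ ≤ Real.log (1 + t) * Real.log (1 + s) := by
          rw [← mul_assoc]
          exact mul_le_mul_of_nonneg_right h hls
  have h2 : α * Real.log (1 + q ^ (-e - (i + 1) : ℝ)) * Real.log (1 + t)
      ≤ Real.log (1 + s) * Real.log (1 + t) := by linarith [h1]
  exact le_of_mul_le_mul_right h2 hlt

theorem stmt3 (q e α : ℝ) (hq : 2 ≤ q) (hα : 1 < α)
    (h : α * Real.log (1 + q ^ (-e - 1)) ≤ Real.log (1 + q ^ (-e)))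
    (d : ℕ) (hd : 1 ≤ d) :
    ∏ i ∈ Finset.range d, (1 + q ^ (-e - (i : ℝ)))
      ≤ (1 + q ^ (-e)) ^ (α / (α - 1)) := by
  have hq0 : (0:ℝ) < q := by linarith
  set L : ℕ → ℝ := fun i => Real.log (1 + q ^ (-e - i : ℝ)) with hL
  have hpos : ∀ i : ℕ, (0:ℝ) < 1 + q ^ (-e - i : ℝ) := fun i => by
    have := Real.rpow_pos_of_pos hq0 (-e - i : ℝ); linarith
  have hLnonneg : ∀ i, 0 ≤ L i := fun i =>
    Real.log_nonneg (by have := (Real.rpow_pos_of_pos hq0 (-e - i : ℝ)).le; linarith)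
  have hL0 : L 0 = Real.log (1 + q ^ (-e)) := by simp [hL]
  have hα0 : (0:ℝ) < α := by linarith
  have hstep : ∀ i, α * L (i + 1) ≤ L i := fun i => by
    have := step_ineq q e α hq hα h i
    simpa [hL] using this
  have hgeom : ∀ i : ℕ, L i ≤ L 0 * α⁻¹ ^ i := by
    intro i
    induction i with
    | zero => simp
    | succ n ih =>
      have := hstep n
      have h2 : L (n + 1) ≤ L n * α⁻¹ := by
        rw [← div_eq_mul_inv, le_div_iff₀ hα0]
        linarith [hstep n]
      calc L (n + 1) ≤ L n * α⁻¹ := h2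
        _ ≤ (L 0 * α⁻¹ ^ n) * α⁻¹ :=
            mul_le_mul_of_nonneg_right ih (by positivity)
        _ = L 0 * α⁻¹ ^ (n + 1) := by ring
  have hsum : ∑ i ∈ Finset.range d, L i ≤ L 0 * (α / (α - 1)) := by
    have hr0 : (0:ℝ) ≤ α⁻¹ := by positivity
    have hr1 : α⁻¹ < 1 := inv_lt_one_of_one_lt₀ hα
    have hgs : ∑ i ∈ Finset.range d, α⁻¹ ^ i ≤ 1 / (1 - α⁻¹) := by
      rw [geom_sum_eq (ne_of_lt hr1)]
      have heq : (α⁻¹ ^ d - 1) / (α⁻¹ - 1) = (1 - α⁻¹ ^ d) / (1 - α⁻¹) := by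
        rw [← neg_div_neg_eq]; ring_nf
      rw [heq]
      have hd0 : (0:ℝ) ≤ α⁻¹ ^ d := by positivity
      gcongr
      · linarith
    have h1 : (1:ℝ) / (1 - α⁻¹) = α / (α - 1) := by
      field_simp
    calc ∑ i ∈ Finset.range d, L i ≤ ∑ i ∈ Finset.range d, L 0 * α⁻¹ ^ i :=
          Finset.sum_le_sum fun i _ => hgeom i
      _ = L 0 * ∑ i ∈ Finset.range d, α⁻¹ ^ i := by rw [Finset.mul_sum]
      _ ≤ L 0 * (1 / (1 - α⁻¹)) := mul_le_mul_of_nonneg_left hgs (hLnonneg 0)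
      _ = L 0 * (α / (α - 1)) := by rw [h1]
  have hprod : ∏ i ∈ Finset.range d, (1 + q ^ (-e - (i : ℝ)))
      = Real.exp (∑ i ∈ Finset.range d, L i) := by
    rw [Real.exp_sum]
    exact Finset.prod_congr rfl fun i _ => (Real.exp_log (hpos i)).symm
  have hrhs : (1 + q ^ (-e)) ^ (α / (α - 1))
      = Real.exp (Real.log (1 + q ^ (-e)) * (α / (α - 1))) := by
    rw [Real.rpow_def_of_pos]
    have := Real.rpow_pos_of_pos hq0 (-e); linarith
  rw [hprod, hrhs]
  apply Real.exp_le_exp.2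
  rw [← hL0]
  linarith [hsum]
end

section
/- Let n ≥ k ≥ 0 be integers. (a) If q is a real number with q ≥ 3, then C_q(n,k) ≤ 2 · q^{k(n−k)}. (b) If q is a real number with q ≥ 4, then C_q(n,k) ≤ (1 + 2q^{−1}) · q^{k(n−k)}. -/
open Finset

lemma prod_Icc_int (f : ℤ → ℝ) (m : ℕ) :
    ∏ i ∈ Icc (1:ℤ) (m:ℤ), f i = ∏ j ∈ range m, f ((j:ℤ)+1) := by
  induction m with
  | zero => simp
  | succ m ih =>
    have h : Icc (1:ℤ) ((m+1:ℕ):ℤ) = insert ((m:ℤ)+1) (Icc (1:ℤ) (m:ℤ)) := by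
      ext i; simp only [mem_Icc, mem_insert]; push_cast; omega
    rw [h, Finset.prod_insert (by simp), Finset.prod_range_succ, ih, mul_comm]

lemma sum_aux (n : ℤ) (m : ℕ) :
    ∑ j ∈ range m, (n - 2*(j:ℤ) - 1) = (m:ℤ) * (n - m) := by
  induction m with
  | zero => simp
  | succ m ih => rw [Finset.sum_range_succ, ih]; push_cast; ring

lemma prod_zpow_aux (q : ℝ) (hq : q ≠ 0) (c : ℕ → ℤ) (m : ℕ) :
    ∏ j ∈ range m, q ^ (c j) = q ^ (∑ j ∈ range m, c j) := by
  induction m with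
  | zero => simp
  | succ m ih => rw [Finset.prod_range_succ, Finset.sum_range_succ, ih, zpow_add₀ hq]

lemma prod_lb (x : ℝ) (h0 : 0 ≤ x) (h1 : x < 1) (m : ℕ) :
    1 - (x - x^(m+1))/(1-x) ≤ ∏ j ∈ range m, (1 - x^(j+1)) := by
  induction m with
  | zero => simp
  | succ m ih =>
    rw [Finset.prod_range_succ]
    have ht : 0 ≤ x^(m+1) := pow_nonneg h0 _
    have htx : x^(m+1) ≤ x := by
      calc x^(m+1) ≤ x^1 := pow_le_pow_of_le_one h0 h1.le (by omega)
      _ = x := pow_one x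
    have h1' : (0:ℝ) < 1 - x := by linarith
    have hfac : 0 ≤ 1 - x^(m+1) := by nlinarith
    have step : (1 - (x - x^(m+1))/(1-x)) * (1 - x^(m+1)) ≤
        (∏ j ∈ range m, (1 - x^(j+1))) * (1 - x^(m+1)) :=
      mul_le_mul_of_nonneg_right ih hfac
    refine le_trans ?_ step
    have hd1 : (x - x^(m+1))/(1-x) * (1-x) = x - x^(m+1) := div_mul_cancel₀ _ h1'.ne'
    have hd2 : (x - x^(m+1+1))/(1-x) * (1-x) = x - x^(m+1+1) := div_mul_cancel₀ _ h1'.ne'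
    have e : x^(m+1+1) = x^(m+1) * x := by ring
    nlinarith [sq_nonneg (x^(m+1)), mul_nonneg ht (sub_nonneg.2 htx)]

lemma gauss_le (n k : ℤ) (hk : 0 ≤ k) (hkn : k ≤ n) (q B : ℝ) (hq : 1 < q) (hB0 : 0 < B)
    (hB : B⁻¹ ≤ ∏ j ∈ range k.toNat, (1 - (q⁻¹)^(j+1))) :
    gaussBinom q n k ≤ B * q ^ (k*(n-k)) := by
  have hq0 : (0:ℝ) < q := lt_trans one_pos hq
  set m := k.toNat with hm
  have hkm : (m:ℤ) = k := Int.toNat_of_nonneg hk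
  rw [gaussBinom, if_pos ⟨hk, hkn⟩, ← hkm, prod_Icc_int]
  have hden : ∀ j : ℕ, (0:ℝ) < q ^ ((j:ℤ)+1) - 1 := by
    intro j
    have : (1:ℝ) < q ^ ((j:ℤ)+1) := one_lt_zpow₀ hq (by omega)
    linarith
  have step1 : ∏ j ∈ range m, (q ^ (n - ((j:ℤ)+1) + 1) - 1) / (q ^ ((j:ℤ)+1) - 1)
      ≤ ∏ j ∈ range m, q ^ (n - 2*(j:ℤ) - 1) * (q ^ ((j:ℤ)+1) / (q ^ ((j:ℤ)+1) - 1)) := by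
    apply Finset.prod_le_prod
    · intro j hj
      have hnum : (0:ℝ) ≤ q ^ (n - ((j:ℤ)+1) + 1) - 1 := by
        have : (1:ℝ) ≤ q ^ (n - ((j:ℤ)+1) + 1) := by
          apply one_le_zpow₀ hq.le
          have : (j:ℤ) < m := by exact_mod_cast Finset.mem_range.1 hj
          omega
        linarith
      exact div_nonneg hnum (hden j).le
    · intro j hj
      have he : q ^ (n - 2*(j:ℤ) - 1) * (q ^ ((j:ℤ)+1) / (q ^ ((j:ℤ)+1) - 1))
          = q ^ (n - ((j:ℤ)+1) + 1) / (q ^ ((j:ℤ)+1) - 1) := by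
        rw [mul_div_assoc', ← zpow_add₀ hq0.ne']
        ring_nf
      rw [he]
      apply (div_le_div_iff_of_pos_right (hden j)).2
      linarith [(zpow_pos hq0 (n - ((j:ℤ)+1) + 1) : (0:ℝ) < q ^ (n - ((j:ℤ)+1) + 1))]
  refine step1.trans ?_
  rw [Finset.prod_mul_distrib, prod_zpow_aux q hq0.ne', sum_aux n m, hkm]
  have step2 : ∏ j ∈ range m, q ^ ((j:ℤ)+1) / (q ^ ((j:ℤ)+1) - 1) ≤ B := by
    have hP : ∏ j ∈ range m, q ^ ((j:ℤ)+1) / (q ^ ((j:ℤ)+1) - 1)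
        = (∏ j ∈ range m, (1 - (q⁻¹)^(j+1)))⁻¹ := by
      rw [← Finset.prod_inv_distrib]
      refine Finset.prod_congr rfl fun j _ => ?_
      have hz : q ^ ((j:ℤ)+1) = q ^ (j+1) := by
        rw [← zpow_natCast]; push_cast; ring_nf
      have h1 : (q:ℝ) ^ (j+1) ≠ 0 := by positivity
      have h2 : (q:ℝ) ^ (j+1) - 1 ≠ 0 := by
        have := hden j; rw [hz] at this; linarith
      rw [hz, inv_pow]
      field_simp
    rw [hP]
    have hPpos : 0 < ∏ j ∈ range m, (1 - (q⁻¹)^(j+1)) :=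
      lt_of_lt_of_le (inv_pos.2 hB0) hB
    calc (∏ j ∈ range m, (1 - (q⁻¹)^(j+1)))⁻¹ ≤ (B⁻¹)⁻¹ := by
          exact inv_anti₀ (inv_pos.2 hB0) hB
      _ = B := inv_inv B
  rw [mul_comm]
  exact mul_le_mul_of_nonneg_right step2 (zpow_nonneg hq0.le _)

theorem stmt4 (n k : ℤ) (hk : 0 ≤ k) (hkn : k ≤ n) :
    (∀ q : ℝ, 3 ≤ q → gaussBinom q n k ≤ 2 * q ^ (k * (n - k))) ∧
    (∀ q : ℝ, 4 ≤ q → gaussBinom q n k ≤ (1 + 2 * q⁻¹) * q ^ (k * (n - k))) := by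
  constructor
  · intro q hq3
    have hq1 : (1:ℝ) < q := by linarith
    apply gauss_le n k hk hkn q 2 hq1 two_pos
    set x := q⁻¹ with hxdef
    set m := k.toNat
    have hx0 : 0 ≤ x := inv_nonneg.2 (by linarith)
    have hx3 : x ≤ 1/3 := by
      rw [hxdef, show (1:ℝ)/3 = 3⁻¹ by norm_num]
      exact inv_anti₀ (by norm_num) hq3
    have hx1 : x < 1 := by linarith
    refine le_trans ?_ (prod_lb x hx0 hx1 m)
    have ht : 0 ≤ x^(m+1) := pow_nonneg hx0 _
    have htx : x^(m+1) ≤ x := by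
      calc x^(m+1) ≤ x^1 := pow_le_pow_of_le_one hx0 hx1.le (by omega)
      _ = x := pow_one x
    have hd : (x - x^(m+1))/(1-x) * (1-x) = x - x^(m+1) :=
      div_mul_cancel₀ _ (by linarith)
    nlinarith [hd, ht, htx, hx3, hx0]
  · intro q hq4
    have hq1 : (1:ℝ) < q := by linarith
    have hx0 : (0:ℝ) ≤ q⁻¹ := inv_nonneg.2 (by linarith)
    apply gauss_le n k hk hkn q (1 + 2*q⁻¹) hq1 (by linarith)
    set x := q⁻¹ with hxdef
    set m := k.toNat
    have hx4 : x ≤ 1/4 := by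
      rw [hxdef, show (1:ℝ)/4 = 4⁻¹ by norm_num]
      exact inv_anti₀ (by norm_num) hq4
    have hx1 : x < 1 := by linarith
    refine le_trans ?_ (prod_lb x hx0 hx1 m)
    have ht : 0 ≤ x^(m+1) := pow_nonneg hx0 _
    have htx : x^(m+1) ≤ x := by
      calc x^(m+1) ≤ x^1 := pow_le_pow_of_le_one hx0 hx1.le (by omega)
      _ = x := pow_one x
    have hd : (x - x^(m+1))/(1-x) * (1-x) = x - x^(m+1) :=
      div_mul_cancel₀ _ (by linarith)
    have hpos : (0:ℝ) < 1 + 2*x := by linarith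
    rw [inv_eq_one_div, div_le_iff₀ hpos]
    nlinarith [hd, ht, htx, hx4, hx0, sq_nonneg x]
end

section
/- Let q ≥ 2 be a real number and let n > k > 0 be integers. Then (1 + q^{−1}) · q^{k(n−k)} ≤ C_q(n,k). -/
theorem stmt5 (q : ℝ) (hq : 2 ≤ q) (n k : ℤ) (hk : 0 < k) (hkn : k < n) :
    (1 + q⁻¹) * q ^ (k * (n - k)) ≤ gaussBinom q n k := by
  have hq0 : (0:ℝ) < q := by linarith
  have hq1 : (1:ℝ) < q := by linarith
  have hden : ∀ i : ℤ, 1 ≤ i → (0:ℝ) < q ^ i - 1 := by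
    intro i hi
    have : (1:ℝ) < q ^ i := one_lt_zpow₀ hq1 (by omega)
    linarith
  have hfac : ∀ a b : ℤ, 1 ≤ b → b ≤ a → q ^ (a - b) * (q ^ b - 1) ≤ q ^ a - 1 := by
    intro a b hb hba
    have h1 : (1:ℝ) ≤ q ^ (a - b) := one_le_zpow₀ hq1.le (by omega)
    have : q ^ (a-b) * q ^ b = q ^ a := by rw [← zpow_add₀ hq0.ne']; ring_nf
    nlinarith
  rw [gaussBinom, if_pos ⟨hk.le, hkn.le⟩]
  have hsplit : Finset.Icc (1:ℤ) k = insert 1 (Finset.Icc 2 k) := by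
    ext i; simp only [Finset.mem_Icc, Finset.mem_insert]; omega
  rw [hsplit, Finset.prod_insert (by simp [Finset.mem_Icc])]
  -- first factor bound
  have h1 : (1 + q⁻¹) * q ^ (n - 1) ≤ (q ^ (n - 1 + 1) - 1) / (q ^ (1:ℤ) - 1) := by
    have hd : (0:ℝ) < q ^ (1:ℤ) - 1 := hden 1 le_rfl
    rw [le_div_iff₀ hd]
    have e1 : q ^ (n - 1) * q = q ^ n := by
      rw [← zpow_add_one₀ hq0.ne']; congr 1; ring
    have e2 : q ^ (n - 2) * q = q ^ (n - 1) := by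
      rw [← zpow_add_one₀ hq0.ne']; congr 1; ring
    have e3 : q⁻¹ * q ^ (n - 1) = q ^ (n - 2) := by
      rw [← zpow_neg_one, ← zpow_add₀ hq0.ne']; congr 1; ring
    have e4 : (1:ℝ) ≤ q ^ (n - 2) := one_le_zpow₀ hq1.le (by omega)
    have e5 : q ^ (n - 1 + 1) = q ^ n := by ring_nf
    rw [e5]; simp only [zpow_one]
    nlinarith
  -- tail bound
  have htail : q ^ ((n - k - 1) * (k - 1)) ≤
      ∏ i ∈ Finset.Icc (2:ℤ) k, (q ^ (n - i + 1) - 1) / (q ^ i - 1) := by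
    have step : ∀ i ∈ Finset.Icc (2:ℤ) k,
        q ^ (n - k - 1) * ((q ^ (k + 2 - i) - 1) / (q ^ i - 1)) ≤
          (q ^ (n - i + 1) - 1) / (q ^ i - 1) := by
      intro i hi
      simp only [Finset.mem_Icc] at hi
      have hd := hden i (by omega)
      rw [← mul_div_assoc, div_le_div_iff₀ hd hd]
      have := hfac (n - i + 1) (k + 2 - i) (by omega) (by omega)
      have he : n - i + 1 - (k + 2 - i) = n - k - 1 := by ring
      rw [he] at this
      nlinarith
    have hnn : ∀ i ∈ Finset.Icc (2:ℤ) k,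
        0 ≤ q ^ (n - k - 1) * ((q ^ (k + 2 - i) - 1) / (q ^ i - 1)) := by
      intro i hi
      simp only [Finset.mem_Icc] at hi
      have h1 := hden i (by omega)
      have h2 := hden (k + 2 - i) (by omega)
      positivity
    have hprod := Finset.prod_le_prod hnn step
    have hgone : ∏ i ∈ Finset.Icc (2:ℤ) k, ((q ^ (k + 2 - i) - 1) / (q ^ i - 1)) = 1 := by
      rw [Finset.prod_div_distrib]
      have hrefl : ∏ i ∈ Finset.Icc (2:ℤ) k, (q ^ (k + 2 - i) - 1)
          = ∏ i ∈ Finset.Icc (2:ℤ) k, (q ^ i - 1) := by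
        refine Finset.prod_nbij' (fun i => k + 2 - i) (fun i => k + 2 - i) ?_ ?_ ?_ ?_
          (fun a ha => rfl) <;> simp only [Finset.mem_Icc] <;> intros <;> omega
      rw [hrefl, div_self]
      exact (Finset.prod_pos fun i hi => hden i (by simp only [Finset.mem_Icc] at hi; omega)).ne'
    rw [Finset.prod_mul_distrib, Finset.prod_const, hgone, mul_one] at hprod
    have hcard : (Finset.Icc (2:ℤ) k).card = (k - 1).toNat := by
      rw [Int.card_Icc]; congr 1; omega
    rw [hcard, ← zpow_natCast, ← zpow_mul, Int.toNat_of_nonneg (by omega),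
      mul_comm (n - k - 1)] at hprod
    rwa [mul_comm (k - 1)] at hprod
  -- combine
  have hexp : k * (n - k) = (n - 1) + (n - k - 1) * (k - 1) := by ring
  rw [hexp, zpow_add₀ hq0.ne', ← mul_assoc]
  have hb : 0 ≤ (q ^ (n - 1 + 1) - 1) / (q ^ (1:ℤ) - 1) := by
    have : (0:ℝ) ≤ (1 + q⁻¹) * q ^ (n - 1) := by positivity
    linarith
  have hc : (0:ℝ) ≤ q ^ ((n - k - 1) * (k - 1)) := by positivity
  exact mul_le_mul h1 htail hc hb
end

section
/- Let q > 1 and ε be real numbers and let d ≥ 1 be an integer. For integers 0 ≤ r ≤ d and 0 ≤ s ≤ d define P_{r,s} := Σ_{u=max(r−s,0)}^{min(d−s,r)} (−1)^{r−u} · C_q(d−r, d−s−u) · C_q(r,u) · q^{binom(r−u,2) + binom(s−r+u,2) + (s−r+u)ε}. Then for every integer a with 0 ≤ a < d: (i) Σ_{s=0}^{a} P_{0,d−s} = Σ_{s=0}^{a} C_q(d,s) · q^{binom(d−s,2) + (d−s)ε}; and (ii) for every integer r with 1 ≤ r ≤ d, Σ_{s=0}^{a} P_{r,d−s} = (−1)^{r+a}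 · Σ_{s=max(a−r+1,0)}^{min(a,d−r)} (−1)^s · A(r,s,a), where A(r,s,a) := C_q(d−r,s) · q^{binom(d−r−s,2) + (d−r−s)ε} · C_q(r−1, a−s) · q^{binom(r−a+s,2)}. -/
/-- Vanhove's eigenvalue formula:
`P_{r,s} = Σ_{u=max(r−s,0)}^{min(d−s,r)} (−1)^{r−u} C_q(d−r, d−s−u) C_q(r,u)
q^{binom(r−u,2) + binom(s−r+u,2) + (s−r+u)ε}`. -/
noncomputable def Pval (q ε : ℝ) (d r s : ℤ) : ℝ :=
  ∑ u ∈ Finset.Icc (max (r - s) 0) (min (d - s) r),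
    (-1 : ℝ) ^ (r - u) * gaussBinom q (d - r) (d - s - u) * gaussBinom q r u *
      q ^ (binom2 (r - u) + binom2 (s - r + u) + ((s - r + u : ℤ) : ℝ) * ε)

/-- `A(r,s,a) := C_q(d−r,s) q^{binom(d−r−s,2) + (d−r−s)ε} C_q(r−1, a−s) q^{binom(r−a+s,2)}`. -/
noncomputable def Aval (q ε : ℝ) (d r s a : ℤ) : ℝ :=
  gaussBinom q (d - r) s * q ^ (binom2 (d - r - s) + ((d - r - s : ℤ) : ℝ) * ε) *
    gaussBinom q (r - 1) (a - s) * q ^ binom2 (r - a + s)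

section Aux

variable {q : ℝ}

lemma qsub_ne (hq : 1 < q) {i : ℤ} (hi : 1 ≤ i) : q ^ i - 1 ≠ 0 :=
  sub_ne_zero.2 (ne_of_gt (one_lt_zpow₀ hq (by omega)))

lemma gB_zero {n : ℤ} (hn : 0 ≤ n) : gaussBinom q n 0 = 1 := by
  simp [gaussBinom, hn]

lemma gB_out {n k : ℤ} (h : ¬(0 ≤ k ∧ k ≤ n)) : gaussBinom q n k = 0 := by
  simp [gaussBinom, h]

lemma gB_top {n k : ℤ} (h1 : 1 ≤ k) (h2 : k ≤ n) :
    gaussBinom q n k = gaussBinom q n (k - 1) * ((q ^ (n - k + 1) - 1) / (q ^ k - 1)) := by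
  have e : Finset.Icc (1 : ℤ) k = insert k (Finset.Icc 1 (k - 1)) := by
    ext i; simp only [Finset.mem_Icc, Finset.mem_insert]; omega
  rw [gaussBinom, gaussBinom, if_pos ⟨by omega, h2⟩, if_pos ⟨by omega, by omega⟩, e,
    Finset.prod_insert (by simp only [Finset.mem_Icc]; omega)]
  ring

lemma gB_diag (hq : 1 < q) {n : ℤ} (hn : 0 ≤ n) : gaussBinom q n n = 1 := by
  rw [gaussBinom, if_pos ⟨hn, le_refl n⟩, Finset.prod_div_distrib]
  have e : ∏ i ∈ Finset.Icc (1 : ℤ) n, (q ^ (n - i + 1) - 1)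
      = ∏ i ∈ Finset.Icc (1 : ℤ) n, (q ^ i - 1) := by
    refine Finset.prod_nbij' (fun i => n + 1 - i) (fun i => n + 1 - i) ?_ ?_ ?_ ?_ ?_ <;>
      intro a ha <;> simp only [Finset.mem_Icc] at *
    · omega
    · omega
    · omega
    · omega
    · rw [show n - a + 1 = n + 1 - a by ring]
  rw [e]
  exact div_self (Finset.prod_ne_zero_iff.2 fun i hi =>
    qsub_ne hq (Finset.mem_Icc.1 hi).1)

lemma ratioA (hq : 1 < q) (n : ℤ) : ∀ k : ℤ, 0 ≤ k → k ≤ n - 1 →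
    (q ^ (n - k) - 1) * gaussBinom q n k = (q ^ n - 1) * gaussBinom q (n - 1) k := by
  refine Int.le_induction ?_ ?_
  · intro h
    rw [gB_zero (n := n) (by omega), gB_zero (n := n - 1) (by omega)]
    norm_num
  · intro k hk ih h
    have ih' := ih (by omega)
    have hd1 : q ^ (k + 1) - 1 ≠ 0 := qsub_ne hq (by omega)
    rw [gB_top (by omega : 1 ≤ k + 1) (by omega : k + 1 ≤ n),
      gB_top (by omega : 1 ≤ k + 1) (by omega : k + 1 ≤ n - 1),
      show k + 1 - 1 = k by ring, show n - (k + 1) + 1 = n - k by ring,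
      show n - 1 - (k + 1) + 1 = n - (k + 1) by ring]
    field_simp
    linear_combination (q ^ (n - (k + 1)) - 1) * ih'

lemma ratioB (hq : 1 < q) (n : ℤ) : ∀ k : ℤ, 1 ≤ k → k ≤ n →
    (q ^ k - 1) * gaussBinom q n k = (q ^ n - 1) * gaussBinom q (n - 1) (k - 1) := by
  refine Int.le_induction ?_ ?_
  · intro h
    rw [gB_top le_rfl h, show (1 : ℤ) - 1 = 0 from rfl, gB_zero (n := n) (by omega),
      gB_zero (n := n - 1) (by omega), show n - 1 + 1 = n by ring, zpow_one, one_mul,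
      mul_one, mul_comm, div_mul_cancel₀ _ (sub_ne_zero.2 (ne_of_gt hq))]
  · intro k hk ih h
    have ih' := ih (by omega)
    have hd1 : q ^ (k + 1) - 1 ≠ 0 := qsub_ne hq (by omega)
    have hd2 : q ^ k - 1 ≠ 0 := qsub_ne hq hk
    rw [gB_top (by omega : 1 ≤ k + 1) (by omega : k + 1 ≤ n),
      show k + 1 - 1 = k by ring,
      gB_top hk (by omega : k ≤ n - 1),
      show n - (k + 1) + 1 = n - k by ring,
      show n - 1 - k + 1 = n - k by ring]
    field_simp
    linear_combination (q ^ (n - k) - 1) * ih'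

lemma gB_pascal (hq : 1 < q) {n : ℤ} (k : ℤ) (hn : 1 ≤ n) :
    gaussBinom q n k
      = gaussBinom q (n - 1) k + q ^ (n - k) * gaussBinom q (n - 1) (k - 1) := by
  have hqne : q ≠ 0 := by positivity
  rcases lt_or_ge k 0 with hk | hk
  · rw [gB_out (by omega), gB_out (by omega), gB_out (by omega)]; ring
  rcases eq_or_lt_of_le hk with rfl | hk1
  · rw [gB_zero (n := n) (by omega), gB_zero (n := n - 1) (by omega), gB_out (by omega)]; ring
  rcases lt_or_ge (n - 1) k with hkn | hkn
  · rcases eq_or_lt_of_le (by omega : n ≤ k) with rfl | hkn2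
    · rw [gB_diag hq (by omega), gB_out (by omega), gB_diag hq (by omega)]
      rw [sub_self, zpow_zero]
      ring
    · rw [gB_out (by omega), gB_out (by omega), gB_out (by omega)]; ring
  · have hA := ratioA hq n k (by omega) hkn
    have hB := ratioB hq n k (by omega) (by omega)
    have hn1 : q ^ n - 1 ≠ 0 := qsub_ne hq hn
    have hprod : q ^ (n - k) * q ^ k = q ^ n := by
      rw [← zpow_add₀ hqne, show n - k + k = n by ring]
    apply mul_left_cancel₀ hn1
    linear_combination hA + q ^ (n - k) * hB - gaussBinom q n k * hprod

lemma binom2_zero : binom2 0 = 0 := by norm_num [binom2]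

lemma binom2_succ (m : ℤ) : binom2 (m + 1) = binom2 m + (m : ℝ) := by
  simp only [binom2]
  push_cast
  ring

end Aux

theorem stmt6 (q ε : ℝ) (hq : 1 < q) (d : ℤ) (hd : 1 ≤ d)
    (a : ℤ) (ha : 0 ≤ a) (had : a < d) :
    (∑ s ∈ Finset.Icc (0 : ℤ) a, Pval q ε d 0 (d - s)
        = ∑ s ∈ Finset.Icc (0 : ℤ) a,
            gaussBinom q d s * q ^ (binom2 (d - s) + ((d - s : ℤ) : ℝ) * ε)) ∧
    (∀ r : ℤ, 1 ≤ r → r ≤ d →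
      ∑ s ∈ Finset.Icc (0 : ℤ) a, Pval q ε d r (d - s)
        = (-1 : ℝ) ^ (r + a) *
            ∑ s ∈ Finset.Icc (max (a - r + 1) 0) (min a (d - r)),
              (-1 : ℝ) ^ s * Aval q ε d r s a) := by
  have hq0 : (0 : ℝ) < q := lt_trans one_pos hq
  constructor
  · -- part (i)
    refine Finset.sum_congr rfl fun s hs => ?_
    rw [Finset.mem_Icc] at hs
    rw [Pval, show max ((0 : ℤ) - (d - s)) 0 = 0 by omega,
      show min (d - (d - s)) (0 : ℤ) = 0 by omega,
      Finset.Icc_self, Finset.sum_singleton,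
      show d - (d - s) - 0 = s by ring, show d - (0 : ℤ) = d by ring,
      show (0 : ℤ) - 0 = 0 by ring, show d - s - 0 + 0 = d - s by ring,
      gB_zero le_rfl, zpow_zero, binom2_zero, zero_add]
    ring
  · -- part (ii)
    intro r hr hrd
    revert had
    refine Int.le_induction (motive := fun a _ => a < d →
      (∑ s ∈ Finset.Icc (0 : ℤ) a, Pval q ε d r (d - s)
        = (-1 : ℝ) ^ (r + a) *
            ∑ s ∈ Finset.Icc (max (a - r + 1) 0) (min a (d - r)),
              (-1 : ℝ) ^ s * Aval q ε d r s a)) ?_ ?_ a ha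
    · -- base case a = 0
      intro _
      rw [Finset.Icc_self, Finset.sum_singleton,
        show max ((0 : ℤ) - r + 1) 0 = 0 by omega, show min (0 : ℤ) (d - r) = 0 by omega,
        Finset.Icc_self, Finset.sum_singleton]
      rw [Pval, show max (r - (d - 0)) (0 : ℤ) = 0 by omega,
        show min (d - (d - 0)) r = 0 by omega,
        Finset.Icc_self, Finset.sum_singleton,
        show d - (d - 0) - 0 = 0 by ring, show r - (0 : ℤ) = r by ring,
        show d - (0 : ℤ) - r + 0 = d - r by ring,
        gB_zero (n := d - r) (by omega), gB_zero (n := r) (by omega)]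
      rw [Aval, show d - r - 0 = d - r by ring, show (0 : ℤ) - 0 = 0 by ring,
        show r - 0 + 0 = r by ring, gB_zero (n := d - r) (by omega),
        gB_zero (n := r - 1) (by omega)]
      rw [show binom2 r + binom2 (d - r) + ((d - r : ℤ) : ℝ) * ε
            = (binom2 (d - r) + ((d - r : ℤ) : ℝ) * ε) + binom2 r by ring,
        Real.rpow_add hq0]
      rw [add_zero, zpow_zero]
      ring
    · -- inductive step
      intro a ha ih hlt
      have iha := ih (by omega)
      have hins : Finset.Icc (0 : ℤ) (a + 1) = insert (a + 1) (Finset.Icc 0 a) := by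
        ext i; simp only [Finset.mem_Icc, Finset.mem_insert]; omega
      rw [hins, Finset.sum_insert (by simp only [Finset.mem_Icc]; omega), iha]
      have E1 : (∑ s ∈ Finset.Icc (max (a + 1 - r + 1) 0) (min (a + 1) (d - r)),
            (-1 : ℝ) ^ s * Aval q ε d r s (a + 1))
          = ∑ s ∈ Finset.Icc (max (a - r + 1) 0) (min (a + 1) (d - r)),
              (-1 : ℝ) ^ s * Aval q ε d r s (a + 1) := by
        have hsub : Finset.Icc (max (a + 1 - r + 1) 0) (min (a + 1) (d - r))
            ⊆ Finset.Icc (max (a - r + 1) 0) (min (a + 1) (d - r)) :=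
          Finset.Icc_subset_Icc (by omega) le_rfl
        refine Finset.sum_subset hsub ?_
        intro s hsI hsn
        rw [Finset.mem_Icc] at hsI
        rw [Finset.mem_Icc] at hsn
        rw [Aval, gB_out (n := r - 1) (k := a + 1 - s) (by omega)]
        ring
      have E2 : (∑ s ∈ Finset.Icc (max (a - r + 1) 0) (min a (d - r)),
            (-1 : ℝ) ^ s * Aval q ε d r s a)
          = ∑ s ∈ Finset.Icc (max (a - r + 1) 0) (min (a + 1) (d - r)),
              (-1 : ℝ) ^ s * Aval q ε d r s a := by
        have hsub : Finset.Icc (max (a - r + 1) 0) (min a (d - r))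
            ⊆ Finset.Icc (max (a - r + 1) 0) (min (a + 1) (d - r)) :=
          Finset.Icc_subset_Icc le_rfl (by omega)
        refine Finset.sum_subset hsub ?_
        intro s hsI hsn
        rw [Finset.mem_Icc] at hsI
        rw [Finset.mem_Icc] at hsn
        rw [Aval, gB_out (n := r - 1) (k := a - s) (by omega)]
        ring
      have key : Pval q ε d r (d - (a + 1))
          = ∑ s ∈ Finset.Icc (max (a - r + 1) 0) (min (a + 1) (d - r)),
              (-1 : ℝ) ^ (r + (a + 1)) *
              ((-1 : ℝ) ^ s * Aval q ε d r s (a + 1) + (-1 : ℝ) ^ s * Aval q ε d r s a) := by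
        rw [Pval]
        refine Finset.sum_nbij' (fun u => a + 1 - u) (fun s => a + 1 - s) ?_ ?_ ?_ ?_ ?_
        · intro u hu
          simp only [Finset.mem_Icc] at hu ⊢
          omega
        · intro s hs
          simp only [Finset.mem_Icc] at hs ⊢
          omega
        · intro u _; ring
        · intro s _; ring
        · intro u hu
          simp only [Finset.mem_Icc] at hu
          have hsign : ((-1 : ℝ)) ^ (r + (a + 1)) * (-1 : ℝ) ^ (a + 1 - u)
              = (-1 : ℝ) ^ (r - u) := by
            rw [← zpow_add₀ (by norm_num : (-1 : ℝ) ≠ 0),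
              show r + (a + 1) + (a + 1 - u) = (r - u) + 2 * (a + 1) by ring,
              zpow_add₀ (by norm_num : (-1 : ℝ) ≠ 0),
              Even.neg_one_zpow (n := 2 * (a + 1)) ⟨a + 1, by ring⟩, mul_one]
          rw [Aval, Aval,
            show d - (d - (a + 1)) - u = a + 1 - u by ring,
            show d - r - (a + 1 - u) = d - (a + 1) - r + u by ring,
            show a + 1 - (a + 1 - u) = u by ring,
            show r - (a + 1) + (a + 1 - u) = r - u by ring,
            show a - (a + 1 - u) = u - 1 by ring,
            show r - a + (a + 1 - u) = r - u + 1 by ring]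
          rw [gB_pascal hq u hr]
          have e1 : q ^ binom2 (r - u + 1) = q ^ binom2 (r - u) * q ^ (r - u) := by
            rw [binom2_succ, Real.rpow_add hq0, Real.rpow_intCast]
          rw [e1]
          rw [show binom2 (r - u) + binom2 (d - (a + 1) - r + u)
                + ((d - (a + 1) - r + u : ℤ) : ℝ) * ε
              = binom2 (r - u) + (binom2 (d - (a + 1) - r + u)
                + ((d - (a + 1) - r + u : ℤ) : ℝ) * ε) by ring,
            Real.rpow_add hq0]
          rw [← hsign]
          ring
      rw [key, E1, E2, Finset.mul_sum, Finset.mul_sum, ← Finset.sum_add_distrib]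
      refine Finset.sum_congr rfl fun s hs => ?_
      have hneg : (-1 : ℝ) ^ (r + (a + 1)) = -(-1 : ℝ) ^ (r + a) := by
        rw [show r + (a + 1) = (r + a) + 1 by ring,
          zpow_add_one₀ (by norm_num : (-1 : ℝ) ≠ 0)]
        ring
      rw [hneg]
      ring
end

section
/- Let q ≥ 3 be a real number, ε ∈ {0, 1/2, 1, 3/2, 2}, and d, a integers with d ≥ 3 and 0 ≤ a ≤ d−2. Then |λ_{d−1}^a| ≤ |λ_1^a| and |λ_{d−1}^a| ≤ |λ_d^a|. -/
noncomputable def lamVal (q ε : ℝ) (d r a : ℤ) : ℝ :=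
  (-1 : ℝ) ^ (r + a) *
    ∑ s ∈ Finset.Icc (max (a - r + 1) 0) (min a (d - r)),
      (-1 : ℝ) ^ s * Aval q ε d r s a

lemma gaussBinom_of_neg (q : ℝ) (n k : ℤ) (h : k < 0) : gaussBinom q n k = 0 := by
  rw [gaussBinom, if_neg]; rintro ⟨h1, -⟩; omega

lemma gaussBinom_zero_right (q : ℝ) (n : ℤ) (h : 0 ≤ n) : gaussBinom q n 0 = 1 := by
  rw [gaussBinom, if_pos ⟨le_refl 0, h⟩, Finset.Icc_eq_empty (by omega), Finset.prod_empty]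

lemma Icc_succ (j : ℤ) (h : 0 ≤ j) :
    Finset.Icc (1:ℤ) (j+1) = insert (j+1) (Finset.Icc (1:ℤ) j) := by
  ext i; simp [Finset.mem_Icc]; omega

lemma gaussBinom_succ (q : ℝ) (n j : ℤ) (h0 : 0 ≤ j) (h1 : j + 1 ≤ n) :
    gaussBinom q n (j+1) = gaussBinom q n j * ((q ^ (n - j) - 1) / (q ^ (j+1) - 1)) := by
  rw [gaussBinom, if_pos ⟨by omega, h1⟩, gaussBinom, if_pos ⟨h0, by omega⟩,
    Icc_succ j h0, Finset.prod_insert (by simp [Finset.mem_Icc])]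
  rw [show n - (j+1) + 1 = n - j by ring]
  ring

lemma gaussBinom_pos {q : ℝ} (hq : 1 < q) {n k : ℤ} (h0 : 0 ≤ k) (hk : k ≤ n) :
    0 < gaussBinom q n k := by
  rw [gaussBinom, if_pos ⟨h0, hk⟩]
  apply Finset.prod_pos
  intro i hi
  simp only [Finset.mem_Icc] at hi
  have h1 : (1:ℝ) < q ^ i := one_lt_zpow₀ hq (by omega)
  have h2 : (1:ℝ) < q ^ (n - i + 1) := one_lt_zpow₀ hq (by omega)
  have h3 : (0:ℝ) < q ^ i - 1 := by linarith
  have h4 : (0:ℝ) < q ^ (n - i + 1) - 1 := by linarith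
  exact div_pos h4 h3

lemma gaussBinom_one_one {q : ℝ} (hq : 1 < q) : gaussBinom q 1 1 = 1 := by
  rw [gaussBinom, if_pos ⟨by norm_num, le_refl 1⟩]
  rw [Finset.Icc_self, Finset.prod_singleton]
  norm_num
  intro h; linarith

lemma L1 {q : ℝ} (hq : 1 < q) (n : ℤ) (hn : 1 ≤ n) : ∀ j : ℤ, 0 ≤ j →
    (j ≤ n - 1 → (q ^ n - 1) * gaussBinom q (n - 1) j = (q ^ (n - j) - 1) * gaussBinom q n j) := by
  refine Int.le_induction ?_ ?_
  case _ =>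
    intro _
    rw [gaussBinom_zero_right q (n-1) (by omega), gaussBinom_zero_right q n (by omega)]
    norm_num
  case _ =>
    intro j hj ih hle
    have ih' := ih (by omega)
    rw [gaussBinom_succ q (n-1) j hj (by omega), gaussBinom_succ q n j hj (by omega)]
    have hden : q ^ (j+1) - (1:ℝ) ≠ 0 := by
      have : (1:ℝ) < q ^ (j+1) := one_lt_zpow₀ hq (by omega)
      linarith
    rw [show n - 1 - j = n - (j+1) by ring]
    field_simp
    linear_combination (q ^ (n - (j+1)) - 1) * ih'

lemma L2 {q : ℝ} (hq : 1 < q) (n j : ℤ) (h1 : 1 ≤ j) (h2 : j ≤ n) :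
    (q ^ j - 1) * gaussBinom q n j = (q ^ (n - j + 1) - 1) * gaussBinom q n (j-1) := by
  have h := gaussBinom_succ q n (j-1) (by omega) (by omega)
  rw [show j - 1 + 1 = j by ring] at h
  rw [h]
  have hden : q ^ j - (1:ℝ) ≠ 0 := by
    have : (1:ℝ) < q ^ j := one_lt_zpow₀ hq (by omega)
    linarith
  rw [show n - (j-1) = n - j + 1 by ring]
  field_simp

lemma key_ineq (q E K Qa Qd Qk X Y Z : ℝ) (hq : 3 ≤ q) (hZ : 0 < Z) (hX : 0 ≤ X) (hY : 0 ≤ Y)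
    (hP : 0 < Qd - 1) (hQd : Qd = K * Qa) (hKq : q ≤ K) (hQa1 : 1 ≤ Qa) (hKQd : K ≤ Qd)
    (hE1 : 1 ≤ E) (hE2 : E ≤ q * q) (hEk : E ≤ Qk) (hk1 : 1 ≤ Qk)
    (hdich : Qa = 1 ∨ q ≤ Qa) (hcase : Qa = 1 → q * q ≤ K)
    (hXrel : (Qd - 1) * X = (K - 1) * Z) (hYrel : (Qd - 1) * Y = (Qa - 1) * Z) :
    |E * X - K * Y| ≤ Z * Qk ∧ |E * X - K * Y| ≤ Z * K := by
  have hK1 : 1 ≤ K := by linarith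
  have hXZ : X ≤ Z := by
    have h1 : (K - 1) * Z ≤ (Qd - 1) * Z := mul_le_mul_of_nonneg_right (by linarith) hZ.le
    exact le_of_mul_le_mul_left (by linarith [hXrel]) hP
  have hKYe : (Qd - 1) * (K * Y) = (Qd - K) * Z := by
    linear_combination K * hYrel - Z * hQd
  have hKY : K * Y ≤ Z := by
    have h2 : (Qd - K) * Z ≤ (Qd - 1) * Z := mul_le_mul_of_nonneg_right (by linarith) hZ.le
    exact le_of_mul_le_mul_left (by linarith [hKYe]) hP
  have hEXK : E * X ≤ K * Z := by
    have key : E * (K - 1) ≤ K * (Qd - 1) := by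
      rcases hdich with h | h
      · have hK := hcase h
        rw [hQd, h, mul_one]
        have t0 : (0:ℝ) ≤ (K - E) * (K - 1) :=
          mul_nonneg (by linarith) (by linarith)
        nlinarith [t0]
      · rw [hQd]
        have s1 : E * (K - 1) ≤ (q * q) * (K - 1) :=
          mul_le_mul_of_nonneg_right hE2 (by linarith)
        have s2 : (q * q) * (K - 1) ≤ q * K * K - K := by
          have t1 : (0:ℝ) ≤ q * (K - q) ^ 2 := mul_nonneg (by linarith) (sq_nonneg _)
          have t2 : (0:ℝ) ≤ (q * q - 1) * (K - q) :=
            mul_nonneg (by nlinarith) (by linarith)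
          have t3 : (0:ℝ) ≤ q * (q - 1) := mul_nonneg (by linarith) (by linarith)
          nlinarith [t1, t2, t3]
        have s3 : q * K * K - K ≤ K * (K * Qa - 1) := by
          have t4 : (0:ℝ) ≤ K * K * (Qa - q) :=
            mul_nonneg (mul_nonneg (by linarith) (by linarith)) (by linarith)
          nlinarith [t4]
        linarith
    have h1 : (Qd - 1) * (E * X) = E * (K - 1) * Z := by linear_combination E * hXrel
    have h2 : E * (K - 1) * Z ≤ K * (Qd - 1) * Z := mul_le_mul_of_nonneg_right key hZ.le
    have h3 : (Qd - 1) * (E * X) ≤ (Qd - 1) * (K * Z) := by nlinarith [h1, h2]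
    exact le_of_mul_le_mul_left h3 hP
  have hEX0 : 0 ≤ E * X := mul_nonneg (by linarith) hX
  have hKY0 : 0 ≤ K * Y := mul_nonneg (by linarith) hY
  have hEXZk : E * X ≤ Z * Qk := by
    have h := mul_le_mul hEk hXZ hX (by linarith : (0:ℝ) ≤ Qk)
    calc E * X ≤ Qk * Z := h
      _ = Z * Qk := mul_comm _ _
  have hZZk : Z ≤ Z * Qk := by
    have := mul_le_mul_of_nonneg_left hk1 hZ.le
    linarith [this]
  have hZZK : Z ≤ Z * K := by
    have := mul_le_mul_of_nonneg_left hK1 hZ.le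
    linarith [this]
  have hEXZK : E * X ≤ Z * K := by
    calc E * X ≤ K * Z := hEXK
      _ = Z * K := mul_comm _ _
  constructor
  · rw [abs_sub_le_iff]
    constructor
    · linarith
    · linarith
  · rw [abs_sub_le_iff]
    constructor
    · linarith
    · linarith

theorem stmt9 (q ε : ℝ) (hq : 3 ≤ q)
    (hε : ε ∈ ({0, 1/2, 1, 3/2, 2} : Set ℝ))
    (d a : ℤ) (hd : 3 ≤ d) (ha : 0 ≤ a) (had : a ≤ d - 2) :
    |lamVal q ε d (d - 1) a| ≤ |lamVal q ε d 1 a| ∧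
    |lamVal q ε d (d - 1) a| ≤ |lamVal q ε d d a| := by
  have hq1 : (1:ℝ) < q := by linarith
  have hq0 : (0:ℝ) < q := by linarith
  have hε' : ε = 0 ∨ ε = 1/2 ∨ ε = 1 ∨ ε = 3/2 ∨ ε = 2 := by simpa using hε
  have hε0 : 0 ≤ ε := by rcases hε' with h | h | h | h | h <;> norm_num [h]
  have hε2 : ε ≤ 2 := by rcases hε' with h | h | h | h | h <;> norm_num [h]
  have habs : ∀ m : ℤ, |(-1:ℝ) ^ m| = 1 := fun m => by
    rcases Int.even_or_odd m with h | h
    · rw [h.neg_one_zpow, abs_one]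
    · rw [Odd.neg_one_zpow h, abs_neg, abs_one]
  set X := gaussBinom q (d - 2) a with hXdef
  set Y := gaussBinom q (d - 2) (a - 1) with hYdef
  set Z := gaussBinom q (d - 1) a with hZdef
  set E := q ^ ε with hEdef
  set QB1 := q ^ binom2 (d - 1 - a) with hQB1def
  set QB0 := q ^ binom2 (d - a) with hQB0def
  set Qk := q ^ (((d - 1 - a : ℤ) : ℝ) * ε) with hQkdef
  set K := q ^ (d - 1 - a) with hKdef
  set Qa := q ^ a with hQadef
  set Qd := q ^ (d - 1) with hQddef
  -- evaluations
  have E1 : |lamVal q ε d 1 a| = Z * (QB1 * Qk) := by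
    rw [lamVal, show max (a - 1 + 1) 0 = a by omega, show min a (d - 1) = a by omega,
      Finset.Icc_self, Finset.sum_singleton, abs_mul, habs, one_mul, abs_mul, habs, one_mul]
    have : Aval q ε d 1 a a = Z * (QB1 * Qk) := by
      rw [Aval, show a - a = 0 by ring, show (1:ℤ) - 1 = 0 by ring,
        gaussBinom_zero_right q 0 le_rfl, show (1:ℤ) - a + a = 1 by ring,
        show binom2 1 = 0 by norm_num [binom2], Real.rpow_zero,
        Real.rpow_add hq0]
      rw [hZdef, hQB1def, hQkdef]
      ring
    rw [this, abs_of_pos]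
    have hZp : 0 < Z := gaussBinom_pos hq1 ha (by omega)
    have h1 : 0 < QB1 := Real.rpow_pos_of_pos hq0 _
    have h2 : 0 < Qk := Real.rpow_pos_of_pos hq0 _
    positivity
  have E3 : |lamVal q ε d d a| = Z * QB0 := by
    rw [lamVal, show max (a - d + 1) 0 = 0 by omega, show min a (d - d) = 0 by omega,
      Finset.Icc_self, Finset.sum_singleton, abs_mul, habs, one_mul, abs_mul, habs, one_mul]
    have : Aval q ε d d 0 a = Z * QB0 := by
      rw [Aval, show d - d = 0 by ring, show (0:ℤ) - 0 = 0 by ring,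
        gaussBinom_zero_right q 0 le_rfl, show a - 0 = a by ring,
        show d - a + 0 = d - a by ring,
        show binom2 (0:ℤ) + ((0:ℤ):ℝ) * ε = 0 by norm_num [binom2], Real.rpow_zero]
      rw [hZdef, hQB0def]
      ring
    rw [this, abs_of_pos]
    have hZp : 0 < Z := gaussBinom_pos hq1 ha (by omega)
    have h1 : 0 < QB0 := Real.rpow_pos_of_pos hq0 _
    positivity
  have hA0 : Aval q ε d (d-1) 0 a = E * X * QB1 := by
    rw [Aval, show d - (d-1) = 1 by ring, show (1:ℤ) - 0 = 1 by ring,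
      gaussBinom_zero_right q 1 (by norm_num), show a - 0 = a by ring,
      show d - 1 - 1 = d - 2 by ring, show d - 1 - a + 0 = d - 1 - a by ring,
      show binom2 (1:ℤ) + ((1:ℤ):ℝ) * ε = ε by norm_num [binom2]]
    rw [hXdef, hEdef, hQB1def]
    ring
  have hA1 : Aval q ε d (d-1) 1 a = Y * QB0 := by
    rw [Aval, show d - (d-1) = 1 by ring, show (1:ℤ) - 1 = 0 by ring,
      gaussBinom_one_one hq1, show d - 1 - 1 = d - 2 by ring,
      show d - 1 - a + 1 = d - a by ring,
      show binom2 (0:ℤ) + ((0:ℤ):ℝ) * ε = 0 by norm_num [binom2], Real.rpow_zero]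
    rw [hYdef, hQB0def]
    ring
  have E2 : |lamVal q ε d (d-1) a| = |E * X * QB1 - Y * QB0| := by
    rw [lamVal, abs_mul, habs, one_mul, show max (a - (d-1) + 1) 0 = 0 by omega]
    rcases eq_or_lt_of_le ha with h0 | h0
    · have hY0 : Y = 0 := by rw [hYdef, ← h0]; exact gaussBinom_of_neg q _ _ (by omega)
      rw [show min a (d - (d-1)) = 0 by omega, Finset.Icc_self, Finset.sum_singleton,
        zpow_zero, one_mul, hA0, hY0]
      ring_nf
    · rw [show min a (d - (d-1)) = 1 by omega,
        show Finset.Icc (0:ℤ) 1 = {0, 1} by ext i; simp [Finset.mem_Icc]; omega,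
        Finset.sum_pair (by norm_num : (0:ℤ) ≠ 1), zpow_zero, one_mul, zpow_one, hA0, hA1]
      ring_nf
  rw [E1, E2, E3]
  -- relations
  have hZp : 0 < Z := gaussBinom_pos hq1 ha (by omega)
  have hXp : 0 < X := gaussBinom_pos hq1 ha (by omega)
  have hYn : 0 ≤ Y := by
    rcases eq_or_lt_of_le ha with h0 | h0
    · rw [hYdef, ← h0, gaussBinom_of_neg q _ _ (by omega)]
    · exact (gaussBinom_pos hq1 (by omega) (by omega)).le
  have hP : 0 < Qd - 1 := by
    have : (1:ℝ) < Qd := one_lt_zpow₀ hq1 (by omega)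
    linarith
  have hXrel : (Qd - 1) * X = (K - 1) * Z := by
    have := L1 hq1 (d-1) (by omega) a ha (by omega)
    rw [show d - 1 - 1 = d - 2 by ring] at this
    exact this
  have hYrel : (Qd - 1) * Y = (Qa - 1) * Z := by
    rcases eq_or_lt_of_le ha with h0 | h0
    · have hY0 : Y = 0 := by rw [hYdef, ← h0]; exact gaussBinom_of_neg q _ _ (by omega)
      rw [hY0, hQadef, ← h0, zpow_zero]
      ring
    · have l1 := L1 hq1 (d-1) (by omega) (a-1) (by omega) (by omega)
      rw [show d - 1 - 1 = d - 2 by ring, show d - 1 - (a - 1) = d - a by ring] at l1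
      have l2 := L2 hq1 (d-1) a (by omega) (by omega)
      rw [show d - 1 - a + 1 = d - a by ring] at l2
      rw [← hYdef, ← hQddef] at l1
      rw [← hZdef, ← hQadef] at l2
      linarith [l1, l2]
  have hQdeq : Qd = K * Qa := by
    rw [hQddef, hKdef, hQadef, ← zpow_add₀ (ne_of_gt hq0), show d - 1 - a + a = d - 1 by ring]
  have hKq : q ≤ K := by
    have := zpow_le_zpow_right₀ hq1.le (show (1:ℤ) ≤ d - 1 - a by omega)
    rwa [zpow_one] at this
  have hQa1 : 1 ≤ Qa := one_le_zpow₀ hq1.le ha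
  have hKQd : K ≤ Qd := zpow_le_zpow_right₀ hq1.le (by omega)
  have hE1 : 1 ≤ E := by
    rw [hEdef, ← Real.rpow_zero q]
    exact Real.rpow_le_rpow_of_exponent_le hq1.le hε0
  have hE2 : E ≤ q * q := by
    have h := Real.rpow_le_rpow_of_exponent_le hq1.le hε2
    rwa [show (2:ℝ) = 1 + 1 by norm_num, Real.rpow_add hq0, Real.rpow_one] at h
  have hEk : E ≤ Qk := by
    apply Real.rpow_le_rpow_of_exponent_le hq1.le
    have h1 : (1:ℝ) ≤ ((d - 1 - a : ℤ) : ℝ) := by exact_mod_cast (show (1:ℤ) ≤ d - 1 - a by omega)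
    nlinarith
  have hk1 : 1 ≤ Qk := by
    rw [hQkdef, ← Real.rpow_zero q]
    apply Real.rpow_le_rpow_of_exponent_le hq1.le
    have h1 : (0:ℝ) ≤ ((d - 1 - a : ℤ) : ℝ) := by exact_mod_cast (show (0:ℤ) ≤ d - 1 - a by omega)
    positivity
  have hdich : Qa = 1 ∨ q ≤ Qa := by
    rcases eq_or_lt_of_le ha with h0 | h0
    · left; rw [hQadef, ← h0, zpow_zero]
    · right
      have := zpow_le_zpow_right₀ hq1.le (show (1:ℤ) ≤ a by omega)
      rwa [zpow_one] at this
  have hcase : Qa = 1 → q * q ≤ K := by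
    intro h
    rcases eq_or_lt_of_le ha with h0 | h0
    · have := zpow_le_zpow_right₀ hq1.le (show (2:ℤ) ≤ d - 1 - a by omega)
      rwa [show (2:ℤ) = 1 + 1 by norm_num, zpow_add₀ (ne_of_gt hq0), zpow_one] at this
    · exfalso
      have h1 : (1:ℝ) < Qa := one_lt_zpow₀ hq1 (by omega)
      rw [h] at h1
      exact lt_irrefl 1 h1
  have hQB0eq : QB0 = QB1 * K := by
    rw [hQB0def, hQB1def, hKdef,
      show binom2 (d - a) = binom2 (d - 1 - a) + ((d - 1 - a : ℤ) : ℝ) by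
        unfold binom2; push_cast; ring,
      Real.rpow_add hq0, Real.rpow_intCast]
  have key := key_ineq q E K Qa Qd Qk X Y Z hq hZp hXp.le hYn hP hQdeq hKq hQa1 hKQd
    hE1 hE2 hEk hk1 hdich hcase hXrel hYrel
  have hQB1p : 0 < QB1 := Real.rpow_pos_of_pos hq0 _
  have hfac : E * X * QB1 - Y * QB0 = QB1 * (E * X - K * Y) := by
    rw [hQB0eq]; ring
  rw [hfac, abs_mul, abs_of_pos hQB1p]
  constructor
  · calc QB1 * |E * X - K * Y| ≤ QB1 * (Z * Qk) :=
          mul_le_mul_of_nonneg_left key.1 hQB1p.le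
      _ = Z * (QB1 * Qk) := by ring
  · calc QB1 * |E * X - K * Y| ≤ QB1 * (Z * K) :=
          mul_le_mul_of_nonneg_left key.2 hQB1p.le
      _ = Z * QB0 := by rw [hQB0eq]; ring
end

section
/- Let Y be a set of generators of the symplectic polar space such that dim(W₁ ∩ W₂) ≥ d − 1 for all W₁, W₂ ∈ Y (i.e., Y is a (d,1)-EKR set). If Y contains two distinct generators a and b, then every element of Y contains the (d−1)-dimensional subspace a ∩ b; in particular, there is a (d−1)-dimensional subspace contained in every element of Y. -/
theorem stmt16 (F : Type*) [Field F] [Fintype F]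
    (V : Type*) [AddCommGroup V] [Module F V] [FiniteDimensional F V]
    (d : ℕ) (hd : 0 < d) (hV : Module.finrank F V = 2 * d)
    (B : LinearMap.BilinForm F V) (hBnd : B.Nondegenerate)
    (hBalt : ∀ x : V, B x x = 0)
    (Y : Set (Submodule F V))
    (hYgen : ∀ W ∈ Y, Module.finrank F W = d ∧ ∀ x ∈ W, ∀ y ∈ W, B x y = 0)
    (hYekr : ∀ W₁ ∈ Y, ∀ W₂ ∈ Y, d - 1 ≤ Module.finrank F ↥(W₁ ⊓ W₂))
    (a b : Submodule F V) (ha : a ∈ Y) (hb : b ∈ Y) (hab : a ≠ b) :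
    (∀ c ∈ Y, a ⊓ b ≤ c) ∧
    ∃ P : Submodule F V, Module.finrank F P = d - 1 ∧ ∀ c ∈ Y, P ≤ c := by
  have hrefl : B.IsRefl := LinearMap.BilinForm.IsAlt.isRefl hBalt
  have hda : Module.finrank F a = d := (hYgen a ha).1
  have hdb : Module.finrank F b = d := (hYgen b hb).1
  -- dim (a ⊓ b) = d - 1
  have hPle : Module.finrank F ↥(a ⊓ b) ≤ d := by
    simpa [hda] using Submodule.finrank_mono (inf_le_left : a ⊓ b ≤ a)
  have hPne : Module.finrank F ↥(a ⊓ b) ≠ d := by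
    intro h
    have h1 : a ⊓ b = a := Submodule.eq_of_le_of_finrank_le inf_le_left (by omega)
    have h2 : a ≤ b := le_of_eq_of_le h1.symm inf_le_right
    exact hab (Submodule.eq_of_le_of_finrank_le h2 (by omega))
  have hPd : Module.finrank F ↥(a ⊓ b) = d - 1 := by
    have := hYekr a ha b hb
    omega
  have key : ∀ c ∈ Y, a ⊓ b ≤ c := by
    intro c hc
    by_contra hPc
    have hdc : Module.finrank F c = d := (hYgen c hc).1
    -- finrank (a ⊓ b ⊓ c) < d - 1
    have hlt : Module.finrank F ↥(a ⊓ b ⊓ c) < d - 1 := by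
      rw [← hPd]
      exact Submodule.finrank_lt_finrank_of_lt
        (lt_of_le_of_ne inf_le_left (fun h => hPc (h ▸ inf_le_right)))
    -- (a ⊓ c) ⊔ (b ⊓ c) = c
    have hinf : (a ⊓ c) ⊓ (b ⊓ c) = a ⊓ b ⊓ c := by
      rw [inf_inf_inf_comm, inf_idem]
    have hsum := Submodule.finrank_sup_add_finrank_inf_eq (a ⊓ c) (b ⊓ c)
    rw [hinf] at hsum
    have hac := hYekr a ha c hc
    have hbc := hYekr b hb c hc
    have hSle : (a ⊓ c) ⊔ (b ⊓ c) ≤ c := sup_le inf_le_right inf_le_right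
    have hSd : Module.finrank F ↥((a ⊓ c) ⊔ (b ⊓ c)) ≤ d := by
      simpa [hdc] using Submodule.finrank_mono hSle
    have hSc : (a ⊓ c) ⊔ (b ⊓ c) = c :=
      Submodule.eq_of_le_of_finrank_le hSle (by omega)
    -- a ⊓ b is orthogonal to c
    have horth : ∀ w ∈ a ⊓ b, ∀ x ∈ c, B w x = 0 := by
      intro w hw x hx
      rw [← hSc] at hx
      obtain ⟨y, hy, z, hz, rfl⟩ := Submodule.mem_sup.mp hx
      have h1 : B w y = 0 := (hYgen a ha).2 w hw.1 y hy.1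
      have h2 : B w z = 0 := (hYgen b hb).2 w hw.2 z hz.1
      simp [h1, h2]
    -- so (a ⊓ b) ⊔ c ≤ B.orthogonal c
    have hcO : c ≤ B.orthogonal c := by
      intro x hx
      rw [LinearMap.BilinForm.mem_orthogonal_iff]
      intro n hn
      exact (hYgen c hc).2 n hn x hx
    have hPO : a ⊓ b ≤ B.orthogonal c := by
      intro w hw
      rw [LinearMap.BilinForm.mem_orthogonal_iff]
      intro n hn
      exact hrefl w n (horth w hw n hn)
    have hsupO : (a ⊓ b) ⊔ c ≤ B.orthogonal c := sup_le hPO hcO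
    have hOd : Module.finrank F ↥(B.orthogonal c) = d := by
      rw [LinearMap.BilinForm.finrank_orthogonal hBnd, hV, hdc]
      omega
    have hsupled : Module.finrank F ↥((a ⊓ b) ⊔ c) ≤ d := by
      simpa [hOd] using Submodule.finrank_mono hsupO
    have hsum2 := Submodule.finrank_sup_add_finrank_inf_eq (a ⊓ b) c
    omega
  exact ⟨key, a ⊓ b, hPd, key⟩
end

section
/- Let t ≥ 0 be an integer and let a₁, a₂, a₃ be generators of the symplectic polar space with dim(aᵢ ∩ aⱼ) ≥ d − t for all 1 ≤ i < j ≤ 3. Then 2 · dim(a₁ ∩ a₂ ∩ a₃) ≥ 2d − 3t; that is, the dimension of the triple intersection a₁ ∩ a₂ ∩ a₃ is at least d − (3/2)t. -/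
theorem stmt17 (F : Type*) [Field F] [Fintype F]
    (V : Type*) [AddCommGroup V] [Module F V] [FiniteDimensional F V]
    (d : ℕ) (hd : 0 < d) (hV : Module.finrank F V = 2 * d)
    (B : LinearMap.BilinForm F V) (hBnd : B.Nondegenerate)
    (hBalt : ∀ x : V, B x x = 0)
    (t : ℕ)
    (a₁ a₂ a₃ : Submodule F V)
    (hg₁ : Module.finrank F a₁ = d ∧ ∀ x ∈ a₁, ∀ y ∈ a₁, B x y = 0)
    (hg₂ : Module.finrank F a₂ = d ∧ ∀ x ∈ a₂, ∀ y ∈ a₂, B x y = 0)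
    (hg₃ : Module.finrank F a₃ = d ∧ ∀ x ∈ a₃, ∀ y ∈ a₃, B x y = 0)
    (h12 : (d : ℤ) - t ≤ (Module.finrank F ↥(a₁ ⊓ a₂) : ℤ))
    (h13 : (d : ℤ) - t ≤ (Module.finrank F ↥(a₁ ⊓ a₃) : ℤ))
    (h23 : (d : ℤ) - t ≤ (Module.finrank F ↥(a₂ ⊓ a₃) : ℤ)) :
    2 * (d : ℤ) - 3 * t ≤ 2 * (Module.finrank F ↥(a₁ ⊓ a₂ ⊓ a₃) : ℤ) := by
  have hrefl : B.IsRefl := LinearMap.IsAlt.isRefl hBalt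
  set U₁ := a₁ ⊓ a₂ with hU₁
  set U₂ := a₁ ⊓ a₃ with hU₂
  set U₃ := a₂ ⊓ a₃ with hU₃
  set X := U₁ ⊔ U₂ with hX
  set Z := X ⊔ U₃ with hZ
  -- pairwise orthogonality facts
  have h11 : ∀ x ∈ U₁, ∀ y ∈ U₁, B x y = 0 := fun x hx y hy =>
    hg₁.2 x hx.1 y hy.1
  have h12' : ∀ x ∈ U₁, ∀ y ∈ U₂, B x y = 0 := fun x hx y hy =>
    hg₁.2 x hx.1 y hy.1
  have h21 : ∀ x ∈ U₂, ∀ y ∈ U₁, B x y = 0 := fun x hx y hy =>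
    hg₁.2 x hx.1 y hy.1
  have h22 : ∀ x ∈ U₂, ∀ y ∈ U₂, B x y = 0 := fun x hx y hy =>
    hg₁.2 x hx.1 y hy.1
  have h13' : ∀ x ∈ U₁, ∀ y ∈ U₃, B x y = 0 := fun x hx y hy =>
    hg₂.2 x hx.2 y hy.1
  have h31 : ∀ x ∈ U₃, ∀ y ∈ U₁, B x y = 0 := fun x hx y hy =>
    hg₂.2 x hx.1 y hy.2
  have h23' : ∀ x ∈ U₂, ∀ y ∈ U₃, B x y = 0 := fun x hx y hy =>
    hg₃.2 x hx.2 y hy.2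
  have h32 : ∀ x ∈ U₃, ∀ y ∈ U₂, B x y = 0 := fun x hx y hy =>
    hg₃.2 x hx.2 y hy.2
  have h33 : ∀ x ∈ U₃, ∀ y ∈ U₃, B x y = 0 := fun x hx y hy =>
    hg₂.2 x hx.1 y hy.1
  -- Z is totally isotropic
  have hZiso : ∀ x ∈ Z, ∀ y ∈ Z, B x y = 0 := by
    intro x hx y hy
    rw [hZ, hX, sup_assoc] at hx hy
    obtain ⟨u, hu, w, hw, rfl⟩ := Submodule.mem_sup.mp hx
    obtain ⟨v, hv, w', hw', rfl⟩ := Submodule.mem_sup.mp hw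
    obtain ⟨u', hu', w2, hw2, rfl⟩ := Submodule.mem_sup.mp hy
    obtain ⟨v', hv', w3, hw3, rfl⟩ := Submodule.mem_sup.mp hw2
    simp only [map_add, LinearMap.add_apply]
    rw [h11 u hu u' hu', h12' u hu v' hv', h13' u hu w3 hw3,
        h21 v hv u' hu', h22 v hv v' hv', h23' v hv w3 hw3,
        h31 w' hw' u' hu', h32 w' hw' v' hv', h33 w' hw' w3 hw3]
    ring
  -- hence dim Z ≤ d
  have hZle : Z ≤ B.orthogonal Z := by
    intro x hx
    exact fun n hn => hZiso n hn x hx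
  have hzd : Module.finrank F Z ≤ d := by
    have h1 : Module.finrank F Z ≤ Module.finrank F (B.orthogonal Z) :=
      Submodule.finrank_mono hZle
    rw [LinearMap.BilinForm.finrank_orthogonal hBnd Z, hV] at h1
    omega
  -- dimension counting
  have hsup1 : Module.finrank F X + Module.finrank F ↥(U₁ ⊓ U₂) =
      Module.finrank F U₁ + Module.finrank F U₂ :=
    Submodule.finrank_sup_add_finrank_inf_eq U₁ U₂
  have hU1U2 : U₁ ⊓ U₂ = U₁ ⊓ a₃ := by
    rw [hU₁, hU₂]
    ext x
    simp only [Submodule.mem_inf]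
    tauto
  have hsup2 : Module.finrank F Z + Module.finrank F ↥(X ⊓ U₃) =
      Module.finrank F X + Module.finrank F U₃ :=
    Submodule.finrank_sup_add_finrank_inf_eq X U₃
  have hXU3 : X ⊓ U₃ ≤ U₁ ⊓ a₃ := by
    intro x hx
    have hx1 : x ∈ a₁ := by
      have : X ≤ a₁ := sup_le (fun y hy => hy.1) (fun y hy => hy.1)
      exact this hx.1
    exact ⟨⟨hx1, hx.2.1⟩, hx.2.2⟩
  have hXU3' : Module.finrank F ↥(X ⊓ U₃) ≤ Module.finrank F ↥(U₁ ⊓ a₃) :=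
    Submodule.finrank_mono hXU3
  rw [hU1U2] at hsup1
  omega
end
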